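/- arXiv:1311.5602 — 10 statements merged into one kernel-verified Lean document; each statement's English description precedes it below -/
import Mathlib

section
/- Let A = {A_i}_{i=1}^{N_A} and B = {B_j}_{j=1}^{N_B} be POVMs on the Hilbert space ℂ^N and let ρ be a density operator on ℂ^N. For any two entropic functional pairs (h_A,φ_A) and (h_B,φ_B), the uncertainty relation H_{(h_A,φ_A)}(p(A,ρ)) + H_{(h_B,φ_B)}(p(B,ρ)) ≥ B(c_A,c_B,c_{A,B}) holds, where B(c_A,c_B,c_{A,B}) = D_{(h_A,φ_A)}(γ_A) + D_{(h_B,φ_B)}(γ_B) if γ_{A,B} ≤ γ_A + γ_B, and B(c_A,c_B,c_{A,B}) = min_{θ ∈ [γ_A, γ_{A,B} − γ_B]} ( D_{(h_A,φ_A)}(θ) + D_{(h_B,φ_B)}(γ_{A,B} − θ) ) otherwise. -/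
open scoped BigOperators ComplexOrder

noncomputable section

/-- An entropic functional pair `(h, φ)` in the sense of Salicrú:
`φ : [0,1] → ℝ` is continuous and strictly concave (resp. strictly convex) with `φ 0 = 0`,
and `h : ℝ → ℝ` is continuous and strictly increasing (resp. strictly decreasing)
with `h (φ 1) = 0`. -/
structure EntropicPair where
  phi : ℝ → ℝ
  h : ℝ → ℝ
  phi_cont : ContinuousOn phi (Set.Icc 0 1)
  h_cont : Continuous h
  phi_zero : phi 0 = 0
  norm_zero : h (phi 1) = 0
  admissible : (StrictConcaveOn ℝ (Set.Icc (0:ℝ) 1) phi ∧ StrictMono h) ∨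
               (StrictConvexOn ℝ (Set.Icc (0:ℝ) 1) phi ∧ StrictAnti h)

/-- `p` is a probability vector. -/
def IsProbVec {ι : Type*} [Fintype ι] (p : ι → ℝ) : Prop :=
  (∀ k, 0 ≤ p k) ∧ ∑ k, p k = 1

/-- The Salicrú `(h,φ)`-entropy of a probability vector. -/
noncomputable def EntropicPair.H (e : EntropicPair) {ι : Type*} [Fintype ι] (p : ι → ℝ) : ℝ :=
  e.h (∑ k, e.phi (p k))

/-- The minimal `(h,φ)`-entropy among probability vectors with maximal component `P`. -/
noncomputable def EntropicPair.Hmin (e : EntropicPair) (P : ℝ) : ℝ :=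
  e.h ((⌊1 / P⌋₊ : ℝ) * e.phi P + e.phi (1 - (⌊1 / P⌋₊ : ℝ) * P))

/-- `D_{(h,φ)}(θ) = h(⌊1/cos²θ⌋ φ(cos²θ) + φ(1 − ⌊1/cos²θ⌋ cos²θ))`. -/
noncomputable def EntropicPair.D (e : EntropicPair) (θ : ℝ) : ℝ :=
  e.Hmin (Real.cos θ ^ 2)

/-- A POVM: a finite family of positive semidefinite matrices summing to the identity. -/
def IsPOVM {N M : ℕ} (A : Fin M → Matrix (Fin N) (Fin N) ℂ) : Prop :=
  (∀ i, (A i).PosSemidef) ∧ ∑ i, A i = 1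

/-- A density operator: positive semidefinite with unit trace. -/
def IsDensityOp {N : ℕ} (ρ : Matrix (Fin N) (Fin N) ℂ) : Prop :=
  ρ.PosSemidef ∧ ρ.trace = 1

/-- The operator (spectral) norm of a matrix, acting on Euclidean space. -/
noncomputable def opNorm {N : ℕ} (M : Matrix (Fin N) (Fin N) ℂ) : ℝ :=
  ‖(Matrix.toEuclideanCLM (𝕜 := ℂ) M : EuclideanSpace ℂ (Fin N) →L[ℂ] EuclideanSpace ℂ (Fin N))‖

/-- The positive semidefinite square root (junk value `0` on non-PSD matrices). -/
noncomputable def psdSqrt {N : ℕ} (M : Matrix (Fin N) (Fin N) ℂ) : Matrix (Fin N) (Fin N) ℂ :=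
  open scoped Classical in
  if h : M.PosSemidef then (h.1.eigenvectorUnitary : Matrix (Fin N) (Fin N) ℂ) *
    Matrix.diagonal ((↑) ∘ Real.sqrt ∘ h.1.eigenvalues) *
    star (h.1.eigenvectorUnitary : Matrix (Fin N) (Fin N) ℂ) else 0

/-- Outcome probabilities `p_i(A,ρ) = Tr (A_i ρ)`. -/
noncomputable def probVec {N M : ℕ} (A : Fin M → Matrix (Fin N) (Fin N) ℂ)
    (ρ : Matrix (Fin N) (Fin N) ℂ) : Fin M → ℝ :=
  fun i => ((A i * ρ).trace).re

/-- Overlap `c_A = max_i ‖√A_i‖`. -/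
noncomputable def covA {N M : ℕ} (A : Fin M → Matrix (Fin N) (Fin N) ℂ) : ℝ :=
  ⨆ i, opNorm (psdSqrt (A i))

/-- Overlap `c_{A,B} = max_{i,j} ‖√A_i √B_j‖`. -/
noncomputable def covAB {N Ma Mb : ℕ} (A : Fin Ma → Matrix (Fin N) (Fin N) ℂ)
    (B : Fin Mb → Matrix (Fin N) (Fin N) ℂ) : ℝ :=
  ⨆ i, ⨆ j, opNorm (psdSqrt (A i) * psdSqrt (B j))


/-!
If every entry of a probability vector is at most `P`, a majorization argument based on the
concavity of `φ` (convexity in the other case) shows that its `(h, φ)`-entropy is at least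
`Hmin P`, the entropy of `(P, …, P, 1 - ⌊1/P⌋ P)`. In angular form: `H ≥ D θ` whenever
`cos² θ` bounds the probabilities, and `D` is monotone on `[0, π/2)`.

Let `θA`, `θB` be the angles of the most likely outcomes `i` of `A` and `j` of `B`. Then
`γA ≤ θA` and `γB ≤ θB` because `Tr (A_i ρ) ≤ ‖√A_i‖²`, and the Landau–Pollak inequality
`cos (θA + θB) ≤ ‖√A_i √B_j‖` gives `γAB ≤ θA + θB`. So `H_A + H_B ≥ D_A γA + D_B γB`, and when
`γAB > γA + γB` the sum also dominates `D_A θ + D_B (γAB - θ)` at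
`θ = min θA (γAB - γB) ∈ [γA, γAB - γB]`. Landau–Pollak is proved in Hilbert–Schmidt space, where
`√ρ` is a unit vector and `Tr (A ρ) = ‖√A √ρ‖²`.
-/

open Real Set Finset
open scoped InnerProductSpace

theorem ConcaveOn.add_le_add_of_le_of_add_eq {s : Set ℝ} {φ : ℝ → ℝ} (hφ : ConcaveOn ℝ s φ)
    {a b c d : ℝ} (ha : a ∈ s) (hb : b ∈ s) (hac : a ≤ c) (had : a ≤ d) (habcd : a + b = c + d) :
    φ a + φ b ≤ φ c + φ d := by
  rcases (hac.trans (by linarith : c ≤ b)).eq_or_lt with hab | hab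
  · obtain rfl : c = a := by linarith
    obtain rfl : d = c := by linarith
    rw [hab]
  -- `c` and `d` are the convex combinations of `a` and `b` with swapped weights `w`, `1 - w`.
  set w := (b - c) / (b - a) with hw
  have hw0 : 0 ≤ w := div_nonneg (by linarith) (by linarith)
  have hw1 : 0 ≤ 1 - w := by
    rw [hw, one_sub_div (by linarith)]; exact div_nonneg (by linarith) (by linarith)
  have hc : w * a + (1 - w) * b = c := by rw [hw]; field_simp; ring
  have hd : (1 - w) * a + w * b = d := by
    rw [hw, show d = a + b - c by linarith]; field_simp; ring
  have h₁ := hφ.2 ha hb hw0 hw1 (add_sub_cancel w 1)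
  have h₂ := hφ.2 ha hb hw1 hw0 (sub_add_cancel 1 w)
  simp only [smul_eq_mul, hc, hd] at h₁ h₂
  linarith

theorem sub_nat_floor_div_mul_mem_Ico {P t : ℝ} (hP : 0 < P) (ht : 0 ≤ t) :
    t - ⌊t / P⌋₊ * P ∈ Ico 0 P := by
  have h₁ := Nat.floor_le (div_nonneg ht hP.le)
  have h₂ := Nat.lt_floor_add_one (t / P)
  rw [le_div_iff₀ hP] at h₁
  rw [div_lt_iff₀ hP] at h₂
  constructor <;> linarith

/-- `∑ φ` over the vector `(P, …, P, t - ⌊t/P⌋ P)` of total mass `t`. -/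
def chunkValue (φ : ℝ → ℝ) (P t : ℝ) : ℝ :=
  ⌊t / P⌋₊ * φ P + φ (t - ⌊t / P⌋₊ * P)

theorem chunkValue_nat_mul_add (φ : ℝ → ℝ) {P r : ℝ} (n : ℕ) (hP : 0 < P) (hr : r ∈ Ico 0 P) :
    chunkValue φ P (n * P + r) = n * φ P + φ r := by
  have hn : ⌊(n * P + r) / P⌋₊ = n := by
    rw [Nat.floor_eq_iff (by have := hr.1; positivity), le_div_iff₀ hP, div_lt_iff₀ hP]
    constructor <;> linarith [hr.1, hr.2]
  simp only [chunkValue, hn, add_sub_cancel_left]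

theorem chunkValue_neg (φ : ℝ → ℝ) (P t : ℝ) : chunkValue (-φ) P t = -chunkValue φ P t := by
  simp only [chunkValue, Pi.neg_apply]; ring

theorem ConcaveOn.chunkValue_add_le {φ : ℝ → ℝ} (hφ : ConcaveOn ℝ (Icc 0 1) φ) (hφ0 : φ 0 = 0)
    {P x t : ℝ} (hP : 0 < P) (hx : 0 ≤ x) (hxP : x ≤ P) (ht : 0 ≤ t) (hxt : x + t ≤ 1) :
    chunkValue φ P (x + t) ≤ φ x + chunkValue φ P t := by
  set n := ⌊t / P⌋₊
  obtain ⟨hr0, hrP⟩ := sub_nat_floor_div_mul_mem_Ico hP ht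
  set r := t - n * P
  have htr : t = n * P + r := by ring
  have hrt : r ≤ t := by linarith [mul_nonneg n.cast_nonneg hP.le]
  rw [htr, chunkValue_nat_mul_add φ n hP ⟨hr0, hrP⟩]
  rcases lt_or_ge (x + r) P with hxr | hxr
  · rw [show x + (n * P + r) = n * P + (x + r) by ring,
      chunkValue_nat_mul_add φ n hP ⟨by positivity, hxr⟩]
    have := hφ.add_le_add_of_le_of_add_eq (a := 0) (b := x + r) (c := x) (d := r)
      ⟨le_rfl, zero_le_one⟩ ⟨by positivity, by linarith⟩ hx hr0 (by ring)
    linarith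
  · rw [show x + (n * P + r) = ((n + 1 : ℕ) : ℝ) * P + (x + r - P) by push_cast; ring,
      chunkValue_nat_mul_add φ (n + 1) hP ⟨by linarith, by linarith⟩]
    have := hφ.add_le_add_of_le_of_add_eq (a := x + r - P) (b := P) (c := x) (d := r)
      ⟨by linarith, by linarith⟩ ⟨hP.le, by linarith⟩ (by linarith) (by linarith) (by ring)
    push_cast
    linarith

theorem ConcaveOn.chunkValue_sum_le {ι : Type*} {φ : ℝ → ℝ} (hφ : ConcaveOn ℝ (Icc 0 1) φ)
    (hφ0 : φ 0 = 0) {P : ℝ} (hP : 0 < P) {p : ι → ℝ} (hp0 : ∀ k, 0 ≤ p k) (hpP : ∀ k, p k ≤ P)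
    (s : Finset ι) (hs : ∑ k ∈ s, p k ≤ 1) :
    chunkValue φ P (∑ k ∈ s, p k) ≤ ∑ k ∈ s, φ (p k) := by
  induction s using Finset.cons_induction with
  | empty => simp [chunkValue, hφ0]
  | cons k s hk ih =>
    simp only [sum_cons] at hs ⊢
    have hs0 : 0 ≤ ∑ k ∈ s, p k := sum_nonneg fun k _ => hp0 k
    calc chunkValue φ P (p k + ∑ k ∈ s, p k)
        ≤ φ (p k) + chunkValue φ P (∑ k ∈ s, p k) :=
          hφ.chunkValue_add_le hφ0 hP (hp0 k) (hpP k) hs0 hs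
      _ ≤ φ (p k) + ∑ k ∈ s, φ (p k) := by gcongr; exact ih (by linarith [hp0 k])

theorem IsProbVec.le_one {ι : Type*} [Fintype ι] {p : ι → ℝ} (hp : IsProbVec p) (k : ι) :
    p k ≤ 1 :=
  hp.2 ▸ single_le_sum (fun j _ => hp.1 j) (mem_univ k)

theorem IsProbVec.pos_of_forall_le {ι : Type*} [Fintype ι] {p : ι → ℝ} (hp : IsProbVec p)
    {i : ι} (hi : ∀ k, p k ≤ p i) : 0 < p i := by
  by_contra! h
  have : ∑ k, p k ≤ 0 := sum_nonpos fun k _ => (hi k).trans h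
  linarith [hp.2]

def chunkVec (P : ℝ) : Fin (⌊1 / P⌋₊ + 1) → ℝ :=
  Fin.snoc (fun _ => P) (1 - ⌊1 / P⌋₊ * P)

theorem sum_chunkVec (f : ℝ → ℝ) (P : ℝ) : ∑ k, f (chunkVec P k) = chunkValue f P 1 := by
  simp [chunkVec, chunkValue, Fin.sum_univ_castSucc]

theorem chunkVec_isProbVec {P : ℝ} (hP : 0 < P) : IsProbVec (chunkVec P) := by
  refine ⟨fun k => ?_, by simpa [chunkValue] using sum_chunkVec id P⟩
  induction k using Fin.lastCases with
  | last => simpa [chunkVec] using (sub_nat_floor_div_mul_mem_Ico hP zero_le_one).1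
  | cast k => simpa [chunkVec] using hP.le

theorem chunkVec_le {P : ℝ} (hP : 0 < P) (k : Fin (⌊1 / P⌋₊ + 1)) : chunkVec P k ≤ P := by
  induction k using Fin.lastCases with
  | last => simpa [chunkVec] using (sub_nat_floor_div_mul_mem_Ico hP zero_le_one).2.le
  | cast k => simp [chunkVec]

namespace EntropicPair

variable (e : EntropicPair) {ι : Type*} [Fintype ι]

theorem Hmin_le_H {p : ι → ℝ} (hp : IsProbVec p) {P : ℝ} (hP : 0 < P) (hpP : ∀ k, p k ≤ P) :
    e.Hmin P ≤ e.H p := by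
  have key : ∀ φ : ℝ → ℝ, ConcaveOn ℝ (Icc 0 1) φ → φ 0 = 0 →
      chunkValue φ P 1 ≤ ∑ k, φ (p k) := fun φ hφ hφ0 => by
    simpa only [hp.2] using hφ.chunkValue_sum_le hφ0 hP hp.1 hpP univ hp.2.le
  change e.h (chunkValue e.phi P 1) ≤ e.h _
  rcases e.admissible with ⟨hφ, hh⟩ | ⟨hφ, hh⟩
  · exact hh.monotone (key e.phi hφ.concaveOn e.phi_zero)
  · refine hh.antitone ?_
    have := key (-e.phi) hφ.convexOn.neg (by simp [e.phi_zero])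
    simp only [chunkValue_neg, Pi.neg_apply, sum_neg_distrib] at this
    linarith

theorem H_chunkVec (P : ℝ) : e.H (chunkVec P) = e.Hmin P :=
  congrArg e.h (sum_chunkVec e.phi P)

theorem H_nonneg {p : ι → ℝ} (hp : IsProbVec p) : 0 ≤ e.H p := by
  simpa [Hmin, e.phi_zero, e.norm_zero] using e.Hmin_le_H hp one_pos hp.le_one

theorem D_nonneg (θ : ℝ) : 0 ≤ e.D θ := by
  rcases (sq_nonneg (cos θ)).eq_or_lt with h | h
  · -- the junk value `⌊1 / 0⌋₊ = 0` gives `D θ = h (φ 1) = 0`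
    simp [D, Hmin, ← h, e.phi_zero, e.norm_zero]
  · rw [D, ← e.H_chunkVec]
    exact e.H_nonneg (chunkVec_isProbVec h)

theorem monotoneOn_D : MonotoneOn e.D (Ico 0 (π / 2)) := by
  intro θ₁ h₁ θ₂ h₂ h₁₂
  have hcos₂ : 0 < cos θ₂ := cos_pos_of_mem_Ioo ⟨by linarith [h₂.1, pi_pos], h₂.2⟩
  have hcos : cos θ₂ ^ 2 ≤ cos θ₁ ^ 2 := pow_le_pow_left₀ hcos₂.le
    (cos_le_cos_of_nonneg_of_le_pi h₁.1 (by linarith [h₂.2, pi_pos]) h₁₂) 2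
  have hP : 0 < cos θ₂ ^ 2 := pow_pos hcos₂ 2
  rw [D, D, ← e.H_chunkVec (cos θ₂ ^ 2)]
  exact e.Hmin_le_H (chunkVec_isProbVec hP) (hP.trans_le hcos)
    fun k => (chunkVec_le hP k).trans hcos

theorem D_arccos_sqrt {x : ℝ} (hx₀ : 0 ≤ x) (hx₁ : x ≤ 1) : e.D (arccos √x) = e.Hmin x := by
  rw [D, cos_arccos (by linarith [sqrt_nonneg x]) (sqrt_le_one.mpr hx₁), sq_sqrt hx₀]

theorem D_arccos_sqrt_le_H {p : ι → ℝ} (hp : IsProbVec p) {i : ι} (hi : ∀ k, p k ≤ p i) :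
    e.D (arccos √(p i)) ≤ e.H p := by
  rw [e.D_arccos_sqrt (hp.1 i) (hp.le_one i)]
  exact e.Hmin_le_H hp (hp.pos_of_forall_le hi) hi

end EntropicPair

theorem arccos_le_arccos_sqrt_add_arccos_sqrt {p q c : ℝ} (hp₀ : 0 ≤ p) (hp₁ : p ≤ 1)
    (hq₀ : 0 ≤ q) (hq₁ : q ≤ 1) (h : √p * √q - √(1 - p) * √(1 - q) ≤ c) :
    arccos c ≤ arccos √p + arccos √q := by
  have hmem : arccos √p + arccos √q ∈ Icc 0 π := by
    constructor
    · linarith [arccos_nonneg √p, arccos_nonneg √q]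
    · linarith [arccos_le_pi_div_two.mpr (sqrt_nonneg p), arccos_le_pi_div_two.mpr (sqrt_nonneg q)]
  rw [← arccos_cos hmem.1 hmem.2]
  refine arccos_le_arccos ?_
  rwa [cos_add, sin_arccos, sin_arccos,
    cos_arccos (by linarith [sqrt_nonneg p]) (sqrt_le_one.mpr hp₁),
    cos_arccos (by linarith [sqrt_nonneg q]) (sqrt_le_one.mpr hq₁), sq_sqrt hp₀, sq_sqrt hq₀]

theorem arccos_sqrt_mem_Ico {x : ℝ} (hx : 0 < x) : arccos √x ∈ Ico 0 (π / 2) :=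
  ⟨arccos_nonneg _, arccos_lt_pi_div_two.mpr (sqrt_pos.mpr hx)⟩

theorem exists_mem_Icc_add_le_add {f g : ℝ → ℝ} {s : Set ℝ} [s.OrdConnected]
    (hf : MonotoneOn f s) (hg : MonotoneOn g s) {a b c x y : ℝ} (ha : a ∈ s) (hb : b ∈ s)
    (hx : x ∈ s) (hy : y ∈ s) (hax : a ≤ x) (hby : b ≤ y) (habc : a + b ≤ c)
    (hcxy : c ≤ x + y) :
    ∃ θ ∈ Icc a (c - b), f θ + g (c - θ) ≤ f x + g y := by
  rcases le_total x (c - b) with hxcb | hcbx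
  · have hcx : c - x ∈ s := Set.OrdConnected.out ‹_› hb hy ⟨by linarith, by linarith⟩
    exact ⟨x, ⟨hax, hxcb⟩, add_le_add le_rfl (hg hcx hy (by linarith))⟩
  · have hcb : c - b ∈ s := Set.OrdConnected.out ‹_› ha hx ⟨by linarith, hcbx⟩
    refine ⟨c - b, ⟨by linarith, le_rfl⟩, ?_⟩
    rw [sub_sub_cancel]
    exact add_le_add (hf hcb hx hcbx) (hg hb hy hby)

theorem mul_sub_sqrt_mul_sqrt_le_real_inner {E : Type*} [NormedAddCommGroup E]
    [InnerProductSpace ℝ E] {ψ X Y : E} {p q : ℝ} (hψ : ‖ψ‖ = 1)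
    (hX : ⟪ψ, X⟫_ℝ = p) (hXp : ‖X‖ ^ 2 ≤ p) (hY : ⟪ψ, Y⟫_ℝ = q) (hYq : ‖Y‖ ^ 2 ≤ q) :
    p * q - √(p * (1 - p)) * √(q * (1 - q)) ≤ ⟪X, Y⟫_ℝ := by
  have hψψ : ⟪ψ, ψ⟫_ℝ = 1 := by rw [real_inner_self_eq_norm_sq, hψ, one_pow]
  have hXψ : ⟪X, ψ⟫_ℝ = p := real_inner_comm X ψ ▸ hX
  have hYψ : ⟪Y, ψ⟫_ℝ = q := real_inner_comm Y ψ ▸ hY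
  -- Remove from `X` and `Y` their components along `ψ`.
  have hXY : ⟪X, Y⟫_ℝ = ⟪X - p • ψ, Y - q • ψ⟫_ℝ + p * q := by
    simp only [inner_sub_left, inner_sub_right, real_inner_smul_left, real_inner_smul_right,
      hψψ, hXψ, hY]
    ring
  have hperp : ∀ {Z : E} {r : ℝ}, ⟪ψ, Z⟫_ℝ = r → ‖Z‖ ^ 2 ≤ r →
      ‖Z - r • ψ‖ ≤ √(r * (1 - r)) := fun {Z r} hZ hZr => by
    refine le_sqrt_of_sq_le ?_
    rw [norm_sub_sq_real, real_inner_smul_right, real_inner_comm, hZ, norm_smul, hψ,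
      norm_eq_abs, mul_one, sq_abs]
    linarith
  have hCS := neg_le_of_abs_le (abs_real_inner_le_norm (X - p • ψ) (Y - q • ψ))
  nlinarith [mul_le_mul (hperp hX hXp) (hperp hY hYq) (norm_nonneg _) (sqrt_nonneg _)]

section Matrices

open Matrix
open scoped MatrixOrder Matrix.Norms.L2Operator

section HilbertSchmidt

variable {m n : Type*} [Fintype m] [Fintype n]

/-- `X` as a vector of Hilbert–Schmidt space. -/
def hsVec (X : Matrix m n ℂ) : EuclideanSpace ℂ (m × n) :=
  WithLp.toLp 2 fun ij => X ij.1 ij.2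

theorem real_inner_hsVec (X Y : Matrix m n ℂ) :
    ⟪hsVec X, hsVec Y⟫_ℝ = ((Xᴴ * Y).trace).re := by
  simp only [hsVec, PiLp.inner_apply, Complex.inner, Matrix.trace, Matrix.diag_apply,
    Matrix.mul_apply, Matrix.conjTranspose_apply, Fintype.sum_prod_type, Complex.re_sum]
  rw [Finset.sum_comm]
  simp [mul_comm]

theorem real_inner_hsVec_mul_left (a : Matrix m m ℂ) (X Y : Matrix m n ℂ) :
    ⟪hsVec (a * X), hsVec Y⟫_ℝ = ⟪hsVec X, hsVec (aᴴ * Y)⟫_ℝ := by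
  rw [real_inner_hsVec, real_inner_hsVec, conjTranspose_mul, Matrix.mul_assoc]

theorem norm_hsVec_sq_eq_sum_columns (X : Matrix m n ℂ) :
    ‖hsVec X‖ ^ 2 = ∑ j, ‖WithLp.toLp 2 fun i => X i j‖ ^ 2 := by
  simp only [EuclideanSpace.norm_sq_eq, hsVec, Fintype.sum_prod_type]
  rw [Finset.sum_comm]

theorem norm_hsVec_mul_le [DecidableEq m] (a : Matrix m m ℂ) (X : Matrix m n ℂ) :
    ‖hsVec (a * X)‖ ≤ ‖a‖ * ‖hsVec X‖ := by
  refine le_of_sq_le_sq ?_ (by positivity)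
  rw [mul_pow, norm_hsVec_sq_eq_sum_columns, norm_hsVec_sq_eq_sum_columns, Finset.mul_sum]
  gcongr with j
  rw [← mul_pow]
  exact pow_le_pow_left₀ (norm_nonneg _) (l2_opNorm_mulVec a (WithLp.toLp 2 fun i => X i j)) 2

end HilbertSchmidt

variable {N : ℕ}

theorem psdSqrt_eq_cfcSqrt {M : Matrix (Fin N) (Fin N) ℂ} (hM : M.PosSemidef) :
    psdSqrt M = CFC.sqrt M := by
  rw [CFC.sqrt_eq_real_sqrt M hM.nonneg, cfcₙ_eq_cfc, hM.1.cfc_eq, psdSqrt, dif_pos hM,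
    IsHermitian.cfc, Unitary.conjStarAlgAut_apply]
  rfl

theorem Matrix.PosSemidef.psdSqrt_mul_self {M : Matrix (Fin N) (Fin N) ℂ} (hM : M.PosSemidef) :
    psdSqrt M * psdSqrt M = M := by
  rw [psdSqrt_eq_cfcSqrt hM]
  exact CFC.sqrt_mul_sqrt_self M hM.nonneg

theorem Matrix.PosSemidef.conjTranspose_psdSqrt {M : Matrix (Fin N) (Fin N) ℂ}
    (hM : M.PosSemidef) : (psdSqrt M)ᴴ = psdSqrt M := by
  rw [psdSqrt_eq_cfcSqrt hM]
  exact (nonneg_iff_posSemidef.mp (CFC.sqrt_nonneg M)).isHermitian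

theorem Matrix.PosSemidef.norm_psdSqrt_le_one {M : Matrix (Fin N) (Fin N) ℂ}
    (hM : M.PosSemidef) (hM₁ : (1 - M).PosSemidef) : ‖psdSqrt M‖ ≤ 1 := by
  rw [psdSqrt_eq_cfcSqrt hM, CFC.norm_sqrt M hM.nonneg, sqrt_le_one,
    CStarAlgebra.norm_le_one_iff_of_nonneg M hM.nonneg]
  exact hM₁

theorem re_trace_mul_eq_norm_hsVec_sq {M ρ : Matrix (Fin N) (Fin N) ℂ} (hM : M.PosSemidef)
    (hρ : ρ.PosSemidef) : ((M * ρ).trace).re = ‖hsVec (psdSqrt M * psdSqrt ρ)‖ ^ 2 := by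
  rw [← real_inner_self_eq_norm_sq, real_inner_hsVec, conjTranspose_mul, hM.conjTranspose_psdSqrt,
    hρ.conjTranspose_psdSqrt, Matrix.mul_assoc, ← Matrix.mul_assoc (psdSqrt M),
    hM.psdSqrt_mul_self, trace_mul_comm (psdSqrt ρ), Matrix.mul_assoc, hρ.psdSqrt_mul_self]

theorem IsDensityOp.norm_hsVec_psdSqrt {ρ : Matrix (Fin N) (Fin N) ℂ} (hρ : IsDensityOp ρ) :
    ‖hsVec (psdSqrt ρ)‖ = 1 := by
  have h := re_trace_mul_eq_norm_hsVec_sq PosSemidef.one hρ.1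
  rw [Matrix.one_mul, hρ.2, psdSqrt_eq_cfcSqrt PosSemidef.one, CFC.sqrt_one, Matrix.one_mul] at h
  exact (pow_eq_one_iff_of_nonneg (norm_nonneg _) two_ne_zero).mp (by simpa using h.symm)

theorem re_trace_mul_le_norm_psdSqrt_sq {M ρ : Matrix (Fin N) (Fin N) ℂ} (hM : M.PosSemidef)
    (hρ : IsDensityOp ρ) : ((M * ρ).trace).re ≤ ‖psdSqrt M‖ ^ 2 := by
  rw [re_trace_mul_eq_norm_hsVec_sq hM hρ.1]
  have := norm_hsVec_mul_le (psdSqrt M) (psdSqrt ρ)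
  rw [hρ.norm_hsVec_psdSqrt, mul_one] at this
  exact pow_le_pow_left₀ (norm_nonneg _) this 2

/-- The Landau–Pollak inequality `cos (θA + θB) ≤ ‖√A √B‖`, where `cos² θA = Tr (A ρ)` and
`cos² θB = Tr (B ρ)`. -/
theorem sqrt_mul_sqrt_sub_le_norm_psdSqrt_mul {A B ρ : Matrix (Fin N) (Fin N) ℂ}
    (hA : A.PosSemidef) (hA₁ : (1 - A).PosSemidef) (hB : B.PosSemidef)
    (hB₁ : (1 - B).PosSemidef) (hρ : IsDensityOp ρ) :
    √((A * ρ).trace.re) * √((B * ρ).trace.re) - √(1 - (A * ρ).trace.re) * √(1 - (B * ρ).trace.re)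
      ≤ ‖psdSqrt A * psdSqrt B‖ := by
  set σ := psdSqrt ρ
  -- `ψ = σ`, `X = √A √A σ`, `Y = √B √B σ` satisfy the hypotheses of
  -- `mul_sub_sqrt_mul_sqrt_le_real_inner` with `p = ‖√A σ‖² = Tr (A ρ)`, `q = ‖√B σ‖² = Tr (B ρ)`.
  have key : ∀ {M : Matrix (Fin N) (Fin N) ℂ}, M.PosSemidef → (1 - M).PosSemidef →
      ⟪hsVec σ, hsVec (psdSqrt M * (psdSqrt M * σ))⟫_ℝ = ‖hsVec (psdSqrt M * σ)‖ ^ 2 ∧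
      ‖hsVec (psdSqrt M * (psdSqrt M * σ))‖ ^ 2 ≤ ‖hsVec (psdSqrt M * σ)‖ ^ 2 := by
    intro M hM hM₁
    refine ⟨?_, pow_le_pow_left₀ (norm_nonneg _) ?_ 2⟩
    · rw [real_inner_comm, real_inner_hsVec_mul_left, hM.conjTranspose_psdSqrt,
        real_inner_self_eq_norm_sq]
    · exact (norm_hsVec_mul_le _ _).trans
        (mul_le_of_le_one_left (norm_nonneg _) (hM.norm_psdSqrt_le_one hM₁))
  obtain ⟨hXψ, hXn⟩ := key hA hA₁
  obtain ⟨hYψ, hYn⟩ := key hB hB₁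
  set u := hsVec (psdSqrt A * σ)
  set v := hsVec (psdSqrt B * σ)
  have hXY : ⟪hsVec (psdSqrt A * (psdSqrt A * σ)), hsVec (psdSqrt B * (psdSqrt B * σ))⟫_ℝ
      ≤ ‖u‖ * (‖psdSqrt A * psdSqrt B‖ * ‖v‖) := by
    rw [real_inner_hsVec_mul_left, hA.conjTranspose_psdSqrt, ← Matrix.mul_assoc,
      ← Matrix.mul_assoc, Matrix.mul_assoc]
    exact (real_inner_le_norm _ _).trans
      (mul_le_mul_of_nonneg_left (norm_hsVec_mul_le _ _) (norm_nonneg _))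
  have hLP := (mul_sub_sqrt_mul_sqrt_le_real_inner hρ.norm_hsVec_psdSqrt hXψ hXn hYψ hYn).trans hXY
  rw [re_trace_mul_eq_norm_hsVec_sq hA hρ.1, re_trace_mul_eq_norm_hsVec_sq hB hρ.1]
  rw [sqrt_mul (sq_nonneg _), sqrt_mul (sq_nonneg _)] at hLP
  simp only [sqrt_sq (norm_nonneg _)] at hLP ⊢
  nlinarith [mul_nonneg (norm_nonneg u) (norm_nonneg v), norm_nonneg (psdSqrt A * psdSqrt B),
    mul_nonneg (sqrt_nonneg (1 - ‖u‖ ^ 2)) (sqrt_nonneg (1 - ‖v‖ ^ 2))]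

theorem opNorm_psdSqrt_le_covA {M : ℕ} (A : Fin M → Matrix (Fin N) (Fin N) ℂ) (i : Fin M) :
    opNorm (psdSqrt (A i)) ≤ covA A :=
  le_ciSup (f := fun i => opNorm (psdSqrt (A i))) (Finite.bddAbove_range _) i

theorem opNorm_psdSqrt_mul_le_covAB {M M' : ℕ} (A : Fin M → Matrix (Fin N) (Fin N) ℂ)
    (B : Fin M' → Matrix (Fin N) (Fin N) ℂ) (i : Fin M) (j : Fin M') :
    opNorm (psdSqrt (A i) * psdSqrt (B j)) ≤ covAB A B :=
  (le_ciSup (Finite.bddAbove_range _) j).trans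
    (le_ciSup (f := fun i => ⨆ j, opNorm (psdSqrt (A i) * psdSqrt (B j)))
      (Finite.bddAbove_range _) i)

section POVM

variable {M : ℕ} {A : Fin M → Matrix (Fin N) (Fin N) ℂ}

theorem IsPOVM.one_sub_posSemidef (hA : IsPOVM A) (i : Fin M) : (1 - A i).PosSemidef := by
  classical
  rw [← hA.2, ← Finset.sum_erase_add _ _ (Finset.mem_univ i), add_sub_cancel_right]
  exact posSemidef_sum _ fun j _ => hA.1 j

theorem IsPOVM.isProbVec_probVec (hA : IsPOVM A) {ρ : Matrix (Fin N) (Fin N) ℂ}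
    (hρ : IsDensityOp ρ) : IsProbVec (probVec A ρ) := by
  refine ⟨fun i => ?_, ?_⟩
  · rw [probVec, re_trace_mul_eq_norm_hsVec_sq (hA.1 i) hρ.1]
    positivity
  · simp only [probVec, ← Complex.re_sum, ← trace_sum, ← Finset.sum_mul, hA.2, Matrix.one_mul,
      hρ.2, Complex.one_re]

theorem IsPOVM.arccos_covA_le (hA : IsPOVM A) {ρ : Matrix (Fin N) (Fin N) ℂ}
    (hρ : IsDensityOp ρ) (i : Fin M) : arccos (covA A) ≤ arccos √(probVec A ρ i) := by
  refine arccos_le_arccos (le_trans ?_ (opNorm_psdSqrt_le_covA A i))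
  exact (sqrt_le_left (norm_nonneg _)).mpr (re_trace_mul_le_norm_psdSqrt_sq (hA.1 i) hρ)

theorem IsPOVM.arccos_covAB_le {M' : ℕ} {B : Fin M' → Matrix (Fin N) (Fin N) ℂ}
    (hA : IsPOVM A) (hB : IsPOVM B) {ρ : Matrix (Fin N) (Fin N) ℂ} (hρ : IsDensityOp ρ)
    (i : Fin M) (j : Fin M') :
    arccos (covAB A B) ≤ arccos √(probVec A ρ i) + arccos √(probVec B ρ j) := by
  have hpA := hA.isProbVec_probVec hρ
  have hpB := hB.isProbVec_probVec hρ
  exact arccos_le_arccos_sqrt_add_arccos_sqrt (hpA.1 i) (hpA.le_one i) (hpB.1 j) (hpB.le_one j)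
    ((sqrt_mul_sqrt_sub_le_norm_psdSqrt_mul (hA.1 i) (hA.one_sub_posSemidef i) (hB.1 j)
      (hB.one_sub_posSemidef j) hρ).trans (opNorm_psdSqrt_mul_le_covAB A B i j))

end POVM

end Matrices

/-- For any pair of POVMs `A`, `B` on `ℂ^N`, any density operator `ρ`,
and any two entropic functional pairs, the sum of Salicrú entropies is bounded below by
the bound `B(c_A, c_B, c_{A,B})` of Eq. (10) of the paper. -/
theorem general_entropic_uncertainty_relation
    {N NA NB : ℕ} (hNA : 0 < NA) (hNB : 0 < NB)
    (A : Fin NA → Matrix (Fin N) (Fin N) ℂ) (B : Fin NB → Matrix (Fin N) (Fin N) ℂ)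
    (hA : IsPOVM A) (hB : IsPOVM B)
    (ρ : Matrix (Fin N) (Fin N) ℂ) (hρ : IsDensityOp ρ)
    (eA eB : EntropicPair)
    (γA γB γAB : ℝ)
    (hγA : γA = Real.arccos (covA A)) (hγB : γB = Real.arccos (covA B))
    (hγAB : γAB = Real.arccos (covAB A B)) :
    eA.H (probVec A ρ) + eB.H (probVec B ρ) ≥
      if γAB ≤ γA + γB then eA.D γA + eB.D γB
      else sInf ((fun θ => eA.D θ + eB.D (γAB - θ)) '' Set.Icc γA (γAB - γB)) := by
  have : Nonempty (Fin NA) := ⟨⟨0, hNA⟩⟩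
  have : Nonempty (Fin NB) := ⟨⟨0, hNB⟩⟩
  obtain ⟨i, hi⟩ := Finite.exists_max (probVec A ρ)
  obtain ⟨j, hj⟩ := Finite.exists_max (probVec B ρ)
  have hpA := hA.isProbVec_probVec hρ
  have hpB := hB.isProbVec_probVec hρ
  set θA := arccos √(probVec A ρ i)
  set θB := arccos √(probVec B ρ j)
  have hθA_mem : θA ∈ Ico 0 (π / 2) := arccos_sqrt_mem_Ico (hpA.pos_of_forall_le hi)
  have hθB_mem : θB ∈ Ico 0 (π / 2) := arccos_sqrt_mem_Ico (hpB.pos_of_forall_le hj)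
  have hγθA : γA ≤ θA := hγA ▸ hA.arccos_covA_le hρ i
  have hγθB : γB ≤ θB := hγB ▸ hB.arccos_covA_le hρ j
  have hγA_mem : γA ∈ Ico 0 (π / 2) := ⟨hγA ▸ arccos_nonneg _, hγθA.trans_lt hθA_mem.2⟩
  have hγB_mem : γB ∈ Ico 0 (π / 2) := ⟨hγB ▸ arccos_nonneg _, hγθB.trans_lt hθB_mem.2⟩
  have hHA := eA.D_arccos_sqrt_le_H hpA hi
  have hHB := eB.D_arccos_sqrt_le_H hpB hj
  split_ifs with hγ
  · exact add_le_add ((eA.monotoneOn_D hγA_mem hθA_mem hγθA).trans hHA)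
      ((eB.monotoneOn_D hγB_mem hθB_mem hγθB).trans hHB)
  · obtain ⟨θ, hθ, hle⟩ := exists_mem_Icc_add_le_add eA.monotoneOn_D eB.monotoneOn_D hγA_mem hγB_mem
      hθA_mem hθB_mem hγθA hγθB (not_le.mp hγ).le (hγAB ▸ hA.arccos_covAB_le hB hρ i j)
    have hbdd : BddBelow ((fun θ => eA.D θ + eB.D (γAB - θ)) '' Icc γA (γAB - γB)) :=
      ⟨0, by rintro _ ⟨θ, -, rfl⟩; exact add_nonneg (eA.D_nonneg θ) (eB.D_nonneg _)⟩
    exact (csInf_le hbdd ⟨θ, hθ, rfl⟩).trans (hle.trans (add_le_add hHA hHB))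
end
end

section
/- For all entropic indices α, β ≥ 0 and every c ∈ (0, 1], the Rényi-entropy bound satisfies B_{α,β;log}(c) = min_{θ ∈ [0, arccos c]} ( R_α^min(cos²θ) + R_β^min(cos²(arccos c − θ)) ) ≥ −2 log((1+c)/2), i.e., it is at least the Deutsch bound B^D(c) = −2 log((1+c)/2). -/
open scoped BigOperators

noncomputable section

/-- Real power with the convention `0 ^ λ := 0`. -/
noncomputable def pow0 (x l : ℝ) : ℝ := if x = 0 then 0 else Real.rpow x l

/-- `R_λ^min(P)`: the minimal Rényi entropy of order `λ` among probability vectors with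
maximal component `P` (for `λ = 1`, the corresponding minimal Shannon entropy). -/
noncomputable def RenyiMin (l P : ℝ) : ℝ :=
  if l = 1 then
    -((⌊1 / P⌋₊ : ℝ) * P * Real.log P)
      - (1 - (⌊1 / P⌋₊ : ℝ) * P) * Real.log (1 - (⌊1 / P⌋₊ : ℝ) * P)
  else (1 - l)⁻¹ *
    Real.log ((⌊1 / P⌋₊ : ℝ) * pow0 P l + pow0 (1 - (⌊1 / P⌋₊ : ℝ) * P) l)

/-- The bound `B_{α,β;log}(c) = min_{θ ∈ [0, arccos c]}
( R_α^min(cos²θ) + R_β^min(cos²(arccos c − θ)) )`. -/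
noncomputable def renyiBound (α β c : ℝ) : ℝ :=
  sInf ((fun θ => RenyiMin α (Real.cos θ ^ 2) + RenyiMin β (Real.cos (Real.arccos c - θ) ^ 2)) ''
    Set.Icc 0 (Real.arccos c))

/-- The minimal Rényi entropy is at least the min-entropy `-log P`. -/
lemma renyiMin_ge_neg_log (l P : ℝ) (hP0 : 0 < P) (hP1 : P ≤ 1) :
    RenyiMin l P ≥ -Real.log P := by
  set n : ℕ := ⌊1 / P⌋₊ with hn
  have hinv : (1:ℝ) ≤ 1 / P := one_le_one_div hP0 hP1
  have hn1 : (1:ℝ) ≤ (n:ℝ) := by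
    have : (1:ℕ) ≤ n := Nat.le_floor (by exact_mod_cast hinv)
    exact_mod_cast this
  have hfl : (n:ℝ) ≤ 1 / P := Nat.floor_le (by positivity)
  have hnP : (n:ℝ) * P ≤ 1 := by
    calc (n:ℝ) * P ≤ (1/P) * P := by nlinarith
    _ = 1 := by field_simp
  set r : ℝ := 1 - (n:ℝ) * P with hr
  have hr0 : 0 ≤ r := by simp only [hr]; linarith
  have hrP : r < P := by
    have h2 : (1:ℝ) / P < (n:ℝ) + 1 := Nat.lt_floor_add_one _
    have h3 : (1:ℝ) < ((n:ℝ) + 1) * P := by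
      calc (1:ℝ) = (1/P) * P := by field_simp
      _ < ((n:ℝ) + 1) * P := by nlinarith
    simp only [hr]; nlinarith
  rcases eq_or_ne l 1 with h1 | h1
  · -- Shannon case
    subst h1
    rw [RenyiMin, if_pos rfl, ← hn, ← hr]
    rcases eq_or_lt_of_le hr0 with hre | hrpos
    · have hnP1 : (n:ℝ) * P = 1 := by simp only [hr] at hre; linarith
      rw [← hre, hnP1]
      simp
    · have hlog : Real.log r ≤ Real.log P := Real.log_le_log hrpos hrP.le
      have h2 : r * Real.log r ≤ r * Real.log P := mul_le_mul_of_nonneg_left hlog hr0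
      have h3 : -Real.log P = -((n:ℝ) * P * Real.log P) - r * Real.log P := by
        simp only [hr]; ring
      rw [ge_iff_le, h3]
      linarith
  · rw [RenyiMin, if_neg h1, ← hn, ← hr]
    have hPne : P ≠ 0 := ne_of_gt hP0
    have hpow0P : pow0 P l = P ^ l := by rw [pow0, if_neg hPne]; rfl
    have hPl : P ^ l = P * P ^ (l - 1) := by
      have h := Real.rpow_add hP0 1 (l - 1)
      rw [Real.rpow_one] at h
      rw [← h]; norm_num
    have hPl1pos : (0:ℝ) < P ^ (l - 1) := Real.rpow_pos_of_pos hP0 _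
    have hPlpos : (0:ℝ) < P ^ l := Real.rpow_pos_of_pos hP0 _
    have hdecomp : P ^ (l - 1) = (n:ℝ) * P ^ l + r * P ^ (l - 1) := by
      rw [hPl]; simp only [hr]; ring
    set S : ℝ := (n:ℝ) * pow0 P l + pow0 r l with hS
    have hpow0r_nonneg : 0 ≤ pow0 r l := by
      rw [pow0]; split
      · exact le_rfl
      · exact Real.rpow_nonneg hr0 _
    have hSpos : 0 < S := by
      rw [hS, hpow0P]
      nlinarith
    have hne : (1:ℝ) - l ≠ 0 := sub_ne_zero.mpr (Ne.symm h1)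
    have hlogP : -Real.log P = (1 - l)⁻¹ * Real.log (P ^ (l - 1)) := by
      rw [Real.log_rpow hP0]
      field_simp
      ring
    rw [ge_iff_le, hlogP]
    rcases lt_or_gt_of_ne h1 with hlt | hgt
    · -- l < 1
      have hcmp : r * P ^ (l - 1) ≤ pow0 r l := by
        rcases eq_or_lt_of_le hr0 with hre | hrpos
        · rw [pow0, if_pos hre.symm, ← hre]; simp
        · rw [pow0, if_neg (ne_of_gt hrpos)]
          have hrl : Real.rpow r l = r * r ^ (l - 1) := by
            have h := Real.rpow_add hrpos 1 (l - 1)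
            rw [Real.rpow_one] at h
            rw [← h]; norm_num
          rw [hrl]
          have : P ^ (l - 1) ≤ r ^ (l - 1) :=
            Real.rpow_le_rpow_of_nonpos hrpos hrP.le (by linarith)
          exact mul_le_mul_of_nonneg_left this hrpos.le
      have hSge : P ^ (l - 1) ≤ S := by
        rw [hdecomp, hS, hpow0P]
        nlinarith
      have := Real.log_le_log hPl1pos hSge
      exact mul_le_mul_of_nonneg_left this (inv_nonneg.mpr (by linarith))
    · -- l > 1
      have hcmp : pow0 r l ≤ r * P ^ (l - 1) := by
        rcases eq_or_lt_of_le hr0 with hre | hrpos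
        · rw [pow0, if_pos hre.symm, ← hre]; simp
        · rw [pow0, if_neg (ne_of_gt hrpos)]
          have hrl : Real.rpow r l = r * r ^ (l - 1) := by
            have h := Real.rpow_add hrpos 1 (l - 1)
            rw [Real.rpow_one] at h
            rw [← h]; norm_num
          rw [hrl]
          have : r ^ (l - 1) ≤ P ^ (l - 1) :=
            Real.rpow_le_rpow hr0 hrP.le (by linarith)
          exact mul_le_mul_of_nonneg_left this hrpos.le
      have hSle : S ≤ P ^ (l - 1) := by
        rw [hdecomp, hS, hpow0P]
        nlinarith
      have hlog : Real.log S ≤ Real.log (P ^ (l - 1)) := Real.log_le_log hSpos hSle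
      have hneg : (1 - l)⁻¹ ≤ 0 := by
        apply inv_nonpos.mpr; linarith
      exact mul_le_mul_of_nonpos_left hlog hneg

/-- For all entropic indices `α, β ≥ 0` and every `c ∈ (0,1]`,
the Rényi-entropy bound `B_{α,β;log}(c)` is at least the Deutsch bound `−2 log((1+c)/2)`. -/
theorem renyiBound_ge_deutsch (α β c : ℝ) (hα : 0 ≤ α) (hβ : 0 ≤ β)
    (hc : c ∈ Set.Ioc (0:ℝ) 1) :
    renyiBound α β c ≥ -2 * Real.log ((1 + c) / 2) := by
  obtain ⟨hc0, hc1⟩ := hc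
  set a := Real.arccos c with ha
  have ha0 : 0 ≤ a := Real.arccos_nonneg c
  have hapi : a < Real.pi / 2 := Real.arccos_lt_pi_div_two.mpr hc0
  have hcosa : Real.cos a = c := Real.cos_arccos (by linarith) hc1
  rw [renyiBound, ge_iff_le]
  apply le_csInf
  · exact (Set.nonempty_Icc.mpr ha0).image _
  · rintro b ⟨θ, ⟨hθ0, hθa⟩, rfl⟩
    have hpi2 : (0:ℝ) < Real.pi / 2 := by positivity
    have hA : 0 < Real.cos θ :=
      Real.cos_pos_of_mem_Ioo ⟨by linarith, by linarith⟩
    have hB : 0 < Real.cos (a - θ) :=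
      Real.cos_pos_of_mem_Ioo ⟨by linarith, by linarith⟩
    set A := Real.cos θ
    set B := Real.cos (a - θ)
    have hA1 : A ≤ 1 := Real.cos_le_one θ
    have hB1 : B ≤ 1 := Real.cos_le_one _
    have hA2 : (0:ℝ) < A ^ 2 := by positivity
    have hB2 : (0:ℝ) < B ^ 2 := by positivity
    have h1 : RenyiMin α (A ^ 2) ≥ -Real.log (A ^ 2) :=
      renyiMin_ge_neg_log α _ hA2 (by nlinarith)
    have h2 : RenyiMin β (B ^ 2) ≥ -Real.log (B ^ 2) :=
      renyiMin_ge_neg_log β _ hB2 (by nlinarith)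
    -- A * B ≤ (1 + c) / 2
    have hprod : A * B ≤ (1 + c) / 2 := by
      have e1 : Real.cos (θ + (a - θ)) = A * B - Real.sin θ * Real.sin (a - θ) :=
        Real.cos_add θ (a - θ)
      have e2 : Real.cos (θ - (a - θ)) = A * B + Real.sin θ * Real.sin (a - θ) :=
        Real.cos_sub θ (a - θ)
      have e3 : θ + (a - θ) = a := by ring
      have hle : Real.cos (θ - (a - θ)) ≤ 1 := Real.cos_le_one _
      rw [e3] at e1
      nlinarith [hcosa]
    have hlogAB : Real.log (A * B) ≤ Real.log ((1 + c) / 2) :=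
      Real.log_le_log (by positivity) hprod
    have hlogsum : Real.log (A ^ 2) + Real.log (B ^ 2) = 2 * Real.log (A * B) := by
      rw [Real.log_pow, Real.log_pow, Real.log_mul (ne_of_gt hA) (ne_of_gt hB)]
      push_cast
      ring
    have : -Real.log (A ^ 2) - Real.log (B ^ 2) ≥ -2 * Real.log ((1 + c) / 2) := by
      have := hlogsum
      nlinarith
    linarith
end
end

section
/- Let c ∈ (0, 1/2] and let (α,β) lie in the region below the conjugacy curve, i.e., either α ∈ [0, 1/2] and β ≥ 0, or α > 1/2 and 0 ≤ β < α/(2α−1). Then the Rényi-entropy bound satisfies B_{α,β;log}(c) ≤ −2 log c, i.e., it does not exceed the Maassen–Uffink bound B^{MU}(c) = −2 log c. -/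
open scoped BigOperators

noncomputable section

lemma pow0_nonneg {x : ℝ} (hx : 0 ≤ x) (l : ℝ) : 0 ≤ pow0 x l := by
  unfold pow0; split
  · exact le_refl 0
  · exact Real.rpow_nonneg hx l

lemma renyiMin_nonneg {l P : ℝ} (hP0 : 0 < P) (hP1 : P ≤ 1) : 0 ≤ RenyiMin l P := by
  set n : ℕ := ⌊1 / P⌋₊ with hn
  have hinv : (1 : ℝ) ≤ 1 / P := (one_le_div hP0).2 hP1
  have hn1 : 1 ≤ n := Nat.le_floor (by exact_mod_cast hinv)
  have hn1' : (1 : ℝ) ≤ (n : ℝ) := by exact_mod_cast hn1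
  have hnP : (n : ℝ) * P ≤ 1 := by
    have := Nat.floor_le (by positivity : (0:ℝ) ≤ 1 / P)
    calc (n : ℝ) * P ≤ (1 / P) * P := by
          apply mul_le_mul_of_nonneg_right _ hP0.le
          exact this
      _ = 1 := by field_simp
  set r : ℝ := 1 - (n : ℝ) * P with hr
  have hr0 : 0 ≤ r := by simp [hr]; linarith
  have hr1 : r ≤ 1 := by
    have : (1:ℝ) * P ≤ (n:ℝ) * P := mul_le_mul_of_nonneg_right hn1' hP0.le
    simp [hr]; nlinarith
  unfold RenyiMin
  split
  · have h1 : Real.log P ≤ 0 := Real.log_nonpos hP0.le hP1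
    have h2 : Real.log r ≤ 0 := Real.log_nonpos hr0 hr1
    have hnP0 : 0 ≤ (n : ℝ) * P := by positivity
    nlinarith [mul_nonneg hnP0 (neg_nonneg.2 h1), mul_nonneg hr0 (neg_nonneg.2 h2)]
  · rename_i hl1
    set S : ℝ := (n : ℝ) * pow0 P l + pow0 r l with hS
    have hPnz : P ≠ 0 := hP0.ne'
    rcases lt_or_gt_of_ne (fun h : l = 1 => hl1 h) with hl | hl
    · -- l < 1 : S ≥ 1
      have hPl : P ≤ pow0 P l := by
        unfold pow0; rw [if_neg hPnz]
        calc P = P ^ (1:ℝ) := (Real.rpow_one P).symm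
          _ ≤ P ^ l := Real.rpow_le_rpow_of_exponent_ge hP0 hP1 hl.le
      have hrl : r ≤ pow0 r l := by
        unfold pow0; split
        · rename_i h; simp [hr] at h ⊢; linarith
        · rename_i h
          have hr0' : 0 < r := lt_of_le_of_ne hr0 (Ne.symm h)
          calc r = r ^ (1:ℝ) := (Real.rpow_one r).symm
            _ ≤ r ^ l := Real.rpow_le_rpow_of_exponent_ge hr0' hr1 hl.le
      have hS1 : 1 ≤ S := by
        have : (n : ℝ) * P ≤ (n : ℝ) * pow0 P l :=
          mul_le_mul_of_nonneg_left hPl (by positivity)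
        simp only [hS]; nlinarith
      have := Real.log_nonneg hS1
      have hpos : 0 < (1 - l)⁻¹ := by
        apply inv_pos.2; linarith
      positivity
    · -- l > 1 : S ≤ 1
      have hPl : pow0 P l ≤ P := by
        unfold pow0; rw [if_neg hPnz]
        calc P ^ l ≤ P ^ (1:ℝ) := Real.rpow_le_rpow_of_exponent_ge hP0 hP1 hl.le
          _ = P := Real.rpow_one P
      have hrl : pow0 r l ≤ r := by
        unfold pow0; split
        · rename_i h; exact hr0
        · rename_i h
          have hr0' : 0 < r := lt_of_le_of_ne hr0 (Ne.symm h)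
          calc r ^ l ≤ r ^ (1:ℝ) := Real.rpow_le_rpow_of_exponent_ge hr0' hr1 hl.le
            _ = r := Real.rpow_one r
      have hS1 : S ≤ 1 := by
        have : (n : ℝ) * pow0 P l ≤ (n : ℝ) * P :=
          mul_le_mul_of_nonneg_left hPl (by positivity)
        simp only [hS]; nlinarith
      have hS0 : 0 ≤ S := by
        have := pow0_nonneg hP0.le l
        have := pow0_nonneg hr0 l
        have : (0:ℝ) ≤ (n : ℝ) * pow0 P l := by positivity
        simp only [hS]; nlinarith [pow0_nonneg hr0 l]
      have hlog : Real.log S ≤ 0 := Real.log_nonpos hS0 hS1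
      have hneg : (1 - l)⁻¹ ≤ 0 := by
        apply inv_nonpos.2; linarith
      nlinarith [mul_nonneg (neg_nonneg.2 hneg) (neg_nonneg.2 hlog)]

lemma renyiMin_le_log_two {l P : ℝ} (hl : 0 ≤ l) (h1 : 1/2 < P) (h2 : P < 1) :
    RenyiMin l P ≤ Real.log 2 := by
  have hP0 : 0 < P := by linarith
  have hfl : ⌊1 / P⌋₊ = 1 := by
    rw [Nat.floor_eq_iff (by positivity)]
    constructor
    · push_cast; exact (one_le_div hP0).2 h2.le
    · push_cast
      rw [div_lt_iff₀ hP0]; linarith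
  set r : ℝ := 1 - P with hrdef
  have hr0 : 0 < r := by simp [hrdef]; linarith
  have hr1 : r < 1 := by simp [hrdef]; linarith
  unfold RenyiMin
  rw [hfl]
  push_cast
  rw [one_mul, one_mul]
  split
  · -- l = 1 : binary entropy
    have : -(P * Real.log P) - (1 - P) * Real.log (1 - P) = Real.binEntropy P := by
      rw [Real.binEntropy]
      rw [Real.log_inv, Real.log_inv]; ring
    rw [this]
    exact Real.binEntropy_le_log_two
  · rename_i hl1
    have hpowP : pow0 P l = P ^ l := by
      unfold pow0; rw [if_neg hP0.ne']; rfl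
    have hpowr : pow0 (1 - P) l = r ^ l := by
      unfold pow0; rw [if_neg (by rw [← hrdef]; exact hr0.ne')]; rw [← hrdef]; rfl
    rw [hpowP, hpowr]
    set S : ℝ := P ^ l + r ^ l with hS
    have hSpos : 0 < S := by
      have := Real.rpow_pos_of_pos hP0 l
      have := Real.rpow_pos_of_pos hr0 l
      simp only [hS]; linarith
    have hmid : P / 2 + r / 2 = 1 / 2 := by simp [hrdef]; ring
    rcases lt_or_gt_of_ne (fun h : l = 1 => hl1 h) with hlt | hgt
    · -- 0 ≤ l < 1 : concavity, S ≤ 2^(1-l)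
      have hcon := (Real.concaveOn_rpow hl hlt.le).2
        (Set.mem_Ici.2 hP0.le) (Set.mem_Ici.2 hr0.le)
        (by norm_num : (0:ℝ) ≤ 1/2) (by norm_num : (0:ℝ) ≤ 1/2) (by norm_num)
      simp only [smul_eq_mul] at hcon
      have hmid' : (1/2 : ℝ) * P + (1/2) * r = 1/2 := by linarith [hmid]
      rw [hmid'] at hcon
      have hhalf : (1/2 : ℝ) ^ l = 2 ^ (-l) := by
        rw [show (1/2 : ℝ) = 2⁻¹ by norm_num, ← Real.rpow_neg_one (2:ℝ),
          ← Real.rpow_mul (by norm_num : (0:ℝ) ≤ 2)]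
        ring_nf
      have hSle : S ≤ 2 ^ (1 - l) := by
        have : S ≤ 2 * (1/2 : ℝ) ^ l := by simp only [hS]; linarith
        calc S ≤ 2 * (1/2 : ℝ) ^ l := this
          _ = 2 ^ (1:ℝ) * 2 ^ (-l) := by rw [hhalf, Real.rpow_one]
          _ = 2 ^ (1 - l) := by
              rw [← Real.rpow_add (by norm_num : (0:ℝ) < 2)]; ring_nf
      have hlog : Real.log S ≤ (1 - l) * Real.log 2 := by
        calc Real.log S ≤ Real.log (2 ^ (1 - l)) := Real.log_le_log hSpos hSle
          _ = (1 - l) * Real.log 2 := Real.log_rpow (by norm_num) _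
      have hpos : 0 < 1 - l := by linarith
      calc (1 - l)⁻¹ * Real.log S ≤ (1 - l)⁻¹ * ((1 - l) * Real.log 2) :=
            mul_le_mul_of_nonneg_left hlog (by positivity)
        _ = Real.log 2 := by field_simp
    · -- l > 1 : convexity, S ≥ 2^(1-l)
      have hcon := (convexOn_rpow hgt.le).2
        (Set.mem_Ici.2 hP0.le) (Set.mem_Ici.2 hr0.le)
        (by norm_num : (0:ℝ) ≤ 1/2) (by norm_num : (0:ℝ) ≤ 1/2) (by norm_num)
      simp only [smul_eq_mul] at hcon
      have hmid' : (1/2 : ℝ) * P + (1/2) * r = 1/2 := by linarith [hmid]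
      rw [hmid'] at hcon
      have hhalf : (1/2 : ℝ) ^ l = 2 ^ (-l) := by
        rw [show (1/2 : ℝ) = 2⁻¹ by norm_num, ← Real.rpow_neg_one (2:ℝ),
          ← Real.rpow_mul (by norm_num : (0:ℝ) ≤ 2)]
        ring_nf
      have hSge : 2 ^ (1 - l) ≤ S := by
        have : 2 * (1/2 : ℝ) ^ l ≤ S := by simp only [hS]; linarith
        calc (2:ℝ) ^ (1 - l) = 2 ^ (1:ℝ) * 2 ^ (-l) := by
              rw [← Real.rpow_add (by norm_num : (0:ℝ) < 2)]; ring_nf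
          _ = 2 * (1/2 : ℝ) ^ l := by rw [hhalf, Real.rpow_one]
          _ ≤ S := this
      have hlog : (1 - l) * Real.log 2 ≤ Real.log S := by
        calc (1 - l) * Real.log 2 = Real.log (2 ^ (1 - l)) :=
              (Real.log_rpow (by norm_num) _).symm
          _ ≤ Real.log S := Real.log_le_log (Real.rpow_pos_of_pos (by norm_num) _) hSge
      have hneg : (1 - l)⁻¹ ≤ 0 := by
        apply inv_nonpos.2; linarith
      calc (1 - l)⁻¹ * Real.log S ≤ (1 - l)⁻¹ * ((1 - l) * Real.log 2) :=
            mul_le_mul_of_nonpos_left hlog hneg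
        _ = Real.log 2 := by
            rw [← mul_assoc, inv_mul_cancel₀ (by linarith : (1:ℝ) - l ≠ 0), one_mul]

/-- For `c ∈ (0, 1/2]` and `(α,β)` below the conjugacy curve, the
Rényi-entropy bound `B_{α,β;log}(c)` does not exceed the Maassen–Uffink bound `−2 log c`. -/
theorem renyiBound_le_maassenUffink (α β c : ℝ) (hα : 0 ≤ α) (hβ : 0 ≤ β)
    (hc : c ∈ Set.Ioc (0:ℝ) (1/2))
    (hregion : α ≤ 1/2 ∨ (1/2 < α ∧ β < α / (2*α - 1))) :
    renyiBound α β c ≤ -2 * Real.log c := by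
  obtain ⟨hc0, hc2⟩ := hc
  set γ := Real.arccos c with hγ
  have hγ0 : 0 ≤ γ := Real.arccos_nonneg c
  have hγlt : γ < Real.pi / 2 := Real.arccos_lt_pi_div_two.2 hc0
  have hcosγ : Real.cos γ = c := Real.cos_arccos (by linarith) (by linarith)
  -- Bounded below by 0
  have hbdd : BddBelow ((fun θ => RenyiMin α (Real.cos θ ^ 2) +
      RenyiMin β (Real.cos (γ - θ) ^ 2)) '' Set.Icc 0 γ) := by
    refine ⟨0, fun x hx => ?_⟩
    obtain ⟨θ, hθ, rfl⟩ := hx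
    obtain ⟨hθ0, hθγ⟩ := hθ
    have hcos1 : 0 < Real.cos θ := Real.cos_pos_of_mem_Ioo
      ⟨by nlinarith [Real.pi_pos], by linarith⟩
    have hcos2 : 0 < Real.cos (γ - θ) := Real.cos_pos_of_mem_Ioo
      ⟨by nlinarith [Real.pi_pos], by linarith⟩
    have h1 := renyiMin_nonneg (l := α) (by positivity : 0 < Real.cos θ ^ 2)
      (by nlinarith [Real.cos_le_one θ, Real.neg_one_le_cos θ])
    have h2 := renyiMin_nonneg (l := β) (by positivity : 0 < Real.cos (γ - θ) ^ 2)
      (by nlinarith [Real.cos_le_one (γ - θ), Real.neg_one_le_cos (γ - θ)])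
    exact add_nonneg h1 h2
  -- the value at θ = γ/2
  have hmem : RenyiMin α (Real.cos (γ/2) ^ 2) + RenyiMin β (Real.cos (γ - γ/2) ^ 2) ∈
      ((fun θ => RenyiMin α (Real.cos θ ^ 2) + RenyiMin β (Real.cos (γ - θ) ^ 2)) ''
        Set.Icc 0 γ) :=
    ⟨γ/2, ⟨by linarith, by linarith⟩, rfl⟩
  have hle := csInf_le hbdd hmem
  have hcossq : Real.cos (γ/2) ^ 2 = (1 + c) / 2 := by
    rw [Real.cos_sq]
    rw [show 2 * (γ/2) = γ by ring, hcosγ]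
    ring
  have hγγ : γ - γ/2 = γ/2 := by ring
  rw [hγγ, hcossq] at hle
  have hP1 : (1:ℝ)/2 < (1 + c)/2 := by linarith
  have hP2 : (1 + c)/2 < 1 := by linarith
  have hA := renyiMin_le_log_two (l := α) hα hP1 hP2
  have hB := renyiMin_le_log_two (l := β) hβ hP1 hP2
  have hlogc : Real.log c ≤ -Real.log 2 := by
    calc Real.log c ≤ Real.log (1/2) := Real.log_le_log hc0 hc2
      _ = -Real.log 2 := by rw [one_div, Real.log_inv]
  unfold renyiBound
  rw [← hγ]
  linarith
end
end

section
/- For every c ∈ (0, 1], with γ = arccos c, one has min_{θ ∈ [0, γ]} ( log ⌈1/cos²θ⌉ + log ⌈1/cos²(γ−θ)⌉ ) = min { 2 log 2 , log ⌈1/c²⌉ }; that is, the Rényi bound at indices α = β = 0 equals B_{0,0;log}(c) = min { 2 log 2 , log ⌈1/c²⌉ }. -/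
open scoped BigOperators

noncomputable section

lemma RenyiMin_zero {P : ℝ} (hP : 0 < P) :
    RenyiMin 0 P = Real.log (⌈1 / P⌉₊ : ℝ) := by
  have h1 : (0:ℝ) ≠ 1 := by norm_num
  rw [RenyiMin, if_neg h1]
  have hP0 : pow0 P 0 = 1 := by rw [pow0, if_neg hP.ne']; exact Real.rpow_zero P
  have hfl : (⌊1/P⌋₊ : ℝ) ≤ 1 / P := Nat.floor_le (by positivity)
  have hnle : (⌊1/P⌋₊ : ℝ) * P ≤ 1 := by
    have h2 := mul_le_mul_of_nonneg_right hfl hP.le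
    have h3 : 1 / P * P = 1 := by field_simp
    linarith
  by_cases h : (⌊1/P⌋₊ : ℝ) * P = 1
  · have hcast : ((⌊1/P⌋₊ : ℕ) : ℝ) = 1 / P := by
      field_simp at h ⊢; linarith [h]
    have hceil : ⌈1/P⌉₊ = ⌊1/P⌋₊ := by
      conv_lhs => rw [← hcast]
      exact Nat.ceil_natCast _
    have hz : (1:ℝ) - (⌊1/P⌋₊ : ℝ) * P = 0 := by linarith
    rw [hz, hceil]
    rw [hP0]
    simp [pow0]
  · have hlt : (⌊1/P⌋₊ : ℝ) * P < 1 := lt_of_le_of_ne hnle h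
    have hz : (1:ℝ) - (⌊1/P⌋₊ : ℝ) * P ≠ 0 := by linarith
    have hpz : pow0 (1 - (⌊1/P⌋₊ : ℝ) * P) 0 = 1 := by
      rw [pow0, if_neg hz]; exact Real.rpow_zero _
    have hceil : ⌈1/P⌉₊ = ⌊1/P⌋₊ + 1 := by
      rw [Nat.ceil_eq_iff (Nat.succ_ne_zero _)]
      constructor
      · push_cast
        rw [lt_div_iff₀ hP]
        exact hlt
      · push_cast
        have := Nat.lt_floor_add_one (1/P)
        exact_mod_cast this.le
    rw [hceil, hP0, hpz]
    push_cast
    ring_nf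

lemma log_two_le_log_ceil {x : ℝ} (h0 : 0 < x) (h2 : x < Real.pi/2) :
    Real.log 2 ≤ Real.log (⌈1 / Real.cos x ^ 2⌉₊ : ℝ) := by
  have hpi := Real.pi_pos
  have hcpos : 0 < Real.cos x := Real.cos_pos_of_mem_Ioo ⟨by linarith, h2⟩
  have hclt : Real.cos x < 1 := by
    have := Real.cos_lt_cos_of_nonneg_of_le_pi le_rfl (by linarith : x ≤ Real.pi) h0
    simpa using this
  have h1lt : (1:ℝ) < 1 / Real.cos x ^ 2 := by
    rw [lt_div_iff₀ (by positivity)]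
    nlinarith
  have hge : 2 ≤ ⌈1 / Real.cos x ^ 2⌉₊ := by
    have := Nat.lt_ceil.mpr (show ((1:ℕ):ℝ) < 1 / Real.cos x ^ 2 by exact_mod_cast h1lt)
    omega
  exact Real.log_le_log (by norm_num) (by exact_mod_cast hge)

lemma ceil_inv_cos_sq_eq_two {x : ℝ} (h0 : 0 < x) (h4 : x ≤ Real.pi/4) :
    ⌈1 / Real.cos x ^ 2⌉₊ = 2 := by
  have hpi := Real.pi_pos
  have h2 : x < Real.pi/2 := by linarith
  have hcpos : 0 < Real.cos x := Real.cos_pos_of_mem_Ioo ⟨by linarith, h2⟩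
  have hclt : Real.cos x < 1 := by
    have := Real.cos_lt_cos_of_nonneg_of_le_pi le_rfl (by linarith : x ≤ Real.pi) h0
    simpa using this
  have hge : Real.sqrt 2 / 2 ≤ Real.cos x := by
    have := Real.cos_le_cos_of_nonneg_of_le_pi h0.le (by linarith : Real.pi/4 ≤ Real.pi) h4
    rwa [Real.cos_pi_div_four] at this
  have hsq : (1:ℝ)/2 ≤ Real.cos x ^ 2 := by
    nlinarith [Real.sq_sqrt (by norm_num : (0:ℝ) ≤ 2), Real.sqrt_nonneg 2]
  have hle2 : 1 / Real.cos x ^ 2 ≤ 2 := by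
    rw [div_le_iff₀ (by positivity)]; nlinarith
  have h1lt : (1:ℝ) < 1 / Real.cos x ^ 2 := by
    rw [lt_div_iff₀ (by positivity)]
    nlinarith
  rw [Nat.ceil_eq_iff (by norm_num)]
  constructor
  · push_cast; linarith
  · push_cast; linarith

/-- For every `c ∈ (0,1]`, with `γ = arccos c`,
`min_{θ∈[0,γ]} (log⌈1/cos²θ⌉ + log⌈1/cos²(γ−θ)⌉) = min{2 log 2, log⌈1/c²⌉}`;
that is, the Rényi bound at indices `α = β = 0` equals `min{2 log 2, log⌈1/c²⌉}`. -/
theorem renyiBound_zero_indices (c : ℝ) (hc : c ∈ Set.Ioc (0:ℝ) 1) :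
    sInf ((fun θ => Real.log (⌈1 / Real.cos θ ^ 2⌉₊ : ℝ) +
          Real.log (⌈1 / Real.cos (Real.arccos c - θ) ^ 2⌉₊ : ℝ)) ''
        Set.Icc 0 (Real.arccos c))
      = min (2 * Real.log 2) (Real.log (⌈1 / c ^ 2⌉₊ : ℝ)) ∧
    renyiBound 0 0 c = min (2 * Real.log 2) (Real.log (⌈1 / c ^ 2⌉₊ : ℝ)) := by
  obtain ⟨hc0, hc1⟩ := hc
  have hpi := Real.pi_pos
  set γ := Real.arccos c with hγ
  have hγ0 : 0 ≤ γ := Real.arccos_nonneg c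
  have hγlt : γ < Real.pi/2 := Real.arccos_lt_pi_div_two.mpr hc0
  have hcosγ : Real.cos γ = c := Real.cos_arccos (by linarith) hc1
  set f : ℝ → ℝ := fun θ => Real.log (⌈1 / Real.cos θ ^ 2⌉₊ : ℝ) +
    Real.log (⌈1 / Real.cos (γ - θ) ^ 2⌉₊ : ℝ) with hf
  set m := min (2 * Real.log 2) (Real.log (⌈1 / c ^ 2⌉₊ : ℝ)) with hm
  have f0 : f 0 = Real.log (⌈1 / c ^ 2⌉₊ : ℝ) := by
    rw [hf]; simp [hcosγ]
  have fγ : f γ = Real.log (⌈1 / c ^ 2⌉₊ : ℝ) := by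
    rw [hf]; simp [hcosγ]
  have hlog4 : 2 * Real.log 2 = Real.log 4 := by
    rw [show (4:ℝ) = 2^2 by norm_num, Real.log_pow]; push_cast; ring
  have hc2pos : (0:ℝ) < 1 / c ^ 2 := by positivity
  have hceilpos : 0 < ⌈1 / c ^ 2⌉₊ := Nat.ceil_pos.mpr hc2pos
  -- lower bound
  have hlb : ∀ x ∈ f '' Set.Icc 0 γ, m ≤ x := by
    rintro x ⟨θ, ⟨hθ0, hθγ⟩, rfl⟩
    rcases eq_or_lt_of_le hθ0 with h|h
    · rw [← h, f0]; exact min_le_right _ _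
    rcases eq_or_lt_of_le hθγ with h2|h2
    · rw [h2, fγ]; exact min_le_right _ _
    · have e1 := log_two_le_log_ceil h (by linarith)
      have e2 := log_two_le_log_ceil (by linarith : 0 < γ - θ) (by linarith)
      calc m ≤ 2 * Real.log 2 := min_le_left _ _
        _ ≤ f θ := by rw [hf]; dsimp only; linarith
  -- membership
  have hmem : m ∈ f '' Set.Icc 0 γ := by
    by_cases h4 : ⌈1 / c ^ 2⌉₊ ≤ 4
    · have hmin : m = Real.log (⌈1 / c ^ 2⌉₊ : ℝ) := by
        rw [hm]
        refine min_eq_right ?_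
        rw [hlog4]
        exact Real.log_le_log (by exact_mod_cast hceilpos) (by exact_mod_cast h4)
      exact ⟨0, ⟨le_rfl, hγ0⟩, (f0.trans hmin.symm)⟩
    · push_neg at h4
      have h4lt : (4:ℝ) < 1 / c ^ 2 := by
        have := Nat.lt_ceil.mp h4
        exact_mod_cast this
      have h4c : 4 * c ^ 2 < 1 := by
        rw [lt_div_iff₀ (by positivity)] at h4lt; linarith
      have hcc : c < 1/2 := by nlinarith
      have hπ4 : Real.pi/4 < γ := by
        by_contra hle
        push_neg at hle
        have h5 : Real.cos (Real.pi/4) ≤ Real.cos γ :=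
          Real.cos_le_cos_of_nonneg_of_le_pi hγ0 (by linarith) hle
        rw [Real.cos_pi_div_four, hcosγ] at h5
        nlinarith [Real.sq_sqrt (by norm_num : (0:ℝ) ≤ 2), Real.sqrt_nonneg 2]
      have hmin : m = 2 * Real.log 2 := by
        rw [hm]
        refine min_eq_left ?_
        rw [hlog4]
        refine Real.log_le_log (by norm_num) ?_
        exact_mod_cast h4.le
      refine ⟨Real.pi/4, ⟨by linarith, hπ4.le⟩, ?_⟩
      have e1 : ⌈1 / Real.cos (Real.pi/4) ^ 2⌉₊ = 2 :=
        ceil_inv_cos_sq_eq_two (by linarith) le_rfl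
      have e2 : ⌈1 / Real.cos (γ - Real.pi/4) ^ 2⌉₊ = 2 :=
        ceil_inv_cos_sq_eq_two (by linarith) (by linarith)
      rw [hf]; dsimp only; rw [e1, e2, hmin]
      push_cast; ring
  have hls : IsLeast (f '' Set.Icc 0 γ) m := ⟨hmem, hlb⟩
  have hfirst : sInf (f '' Set.Icc 0 γ) = m := hls.csInf_eq
  refine ⟨hfirst, ?_⟩
  rw [renyiBound, ← hγ]
  have himg : (fun θ => RenyiMin 0 (Real.cos θ ^ 2) + RenyiMin 0 (Real.cos (γ - θ) ^ 2)) ''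
      Set.Icc 0 γ = f '' Set.Icc 0 γ := by
    refine Set.image_congr ?_
    rintro θ ⟨hθ0, hθγ⟩
    have h1 : 0 < Real.cos θ :=
      Real.cos_pos_of_mem_Ioo ⟨by linarith, by linarith⟩
    have h2 : 0 < Real.cos (γ - θ) :=
      Real.cos_pos_of_mem_Ioo ⟨by linarith, by linarith⟩
    rw [RenyiMin_zero (by positivity), RenyiMin_zero (by positivity)]
  rw [himg, hfirst]
end
end

section
/- For every γ ∈ [0, π/2), the minimum over θ ∈ [0, γ] of the function θ ↦ −2 log(cos θ) − 2 log(cos(γ − θ)) equals −2 log((1 + cos γ)/2), and it is attained at θ = γ/2. Equivalently, setting c = cos γ, the Rényi bound at infinite indices equals the Deutsch bound: B_{∞,∞;log}(c) = −2 log((1+c)/2). -/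
noncomputable section

/-- For `γ ∈ [0, π/2)`, the minimum over `θ ∈ [0,γ]` of
`θ ↦ −2 log(cos θ) − 2 log(cos(γ−θ))` equals `−2 log((1+cos γ)/2)`, attained at `θ = γ/2`.
Equivalently (with `c = cos γ`), the Rényi bound at infinite indices equals Deutsch's bound. -/
theorem min_sum_minEntropies_eq_deutsch (γ : ℝ) (hγ : γ ∈ Set.Ico 0 (Real.pi / 2)) :
    IsLeast ((fun θ => -2 * Real.log (Real.cos θ) - 2 * Real.log (Real.cos (γ - θ))) ''
        Set.Icc 0 γ)
      (-2 * Real.log ((1 + Real.cos γ) / 2)) ∧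
    -2 * Real.log (Real.cos (γ / 2)) - 2 * Real.log (Real.cos (γ - γ / 2))
      = -2 * Real.log ((1 + Real.cos γ) / 2) := by
  obtain ⟨hγ0, hγπ⟩ := hγ
  have hval : -2 * Real.log (Real.cos (γ / 2)) - 2 * Real.log (Real.cos (γ - γ / 2))
      = -2 * Real.log ((1 + Real.cos γ) / 2) := by
    have h2 : γ - γ / 2 = γ / 2 := by ring
    rw [h2]
    have hc : Real.cos (γ / 2) > 0 := by
      apply Real.cos_pos_of_mem_Ioo
      constructor <;> nlinarith [Real.pi_pos]
    have hsq : Real.cos (γ / 2) * Real.cos (γ / 2) = (1 + Real.cos γ) / 2 := by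
      have := Real.cos_sq (γ / 2)
      rw [show 2 * (γ / 2) = γ from by ring] at this
      nlinarith [this]
    rw [← hsq, Real.log_mul hc.ne' hc.ne']
    ring
  refine ⟨⟨⟨γ / 2, ⟨by linarith, by linarith⟩, hval⟩, ?_⟩, hval⟩
  rintro y ⟨θ, ⟨hθ0, hθγ⟩, rfl⟩
  simp only
  have hc1 : Real.cos θ > 0 := by
    apply Real.cos_pos_of_mem_Ioo
    constructor <;> nlinarith [Real.pi_pos]
  have hc2 : Real.cos (γ - θ) > 0 := by
    apply Real.cos_pos_of_mem_Ioo
    constructor <;> nlinarith [Real.pi_pos]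
  have hprod : Real.cos θ * Real.cos (γ - θ) ≤ (1 + Real.cos γ) / 2 := by
    have h1 : Real.cos γ = Real.cos (θ + (γ - θ)) := by ring_nf
    rw [h1, Real.cos_add]
    nlinarith [Real.cos_le_one (θ - (γ - θ)), Real.cos_sub θ (γ - θ)]
  have hlog : Real.log ((1 + Real.cos γ) / 2) ≥ Real.log (Real.cos θ * Real.cos (γ - θ)) :=
    Real.log_le_log (by positivity) hprod
  rw [Real.log_mul hc1.ne' hc2.ne'] at hlog
  linarith
end
end

section
/- Let (h,φ) be an entropic functional pair, let N ≥ 2 and P ∈ [1/N, 1]. Then the minimum of H_{(h,φ)}(p) over all probability vectors p = (p_1,…,p_N) with max_k p_k = P equals H^min_{(h,φ)}(P) = h( ⌊1/P⌋ φ(P) + φ(1 − ⌊1/P⌋ P) ), and the minimum is attained exactly at the probability vectors whose components are a permutation of the N-dimensional vector having its first ⌊1/P⌋ components equal to P, its next component (present when ⌊1/P⌋ < N) equal to 1 − ⌊1/P⌋ P, and all remaining components equal to zero. -/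
open scoped BigOperators

noncomputable section

/-- The `N`-dimensional vector with first `⌊1/P⌋` components equal to `P`, the next component
(present when `⌊1/P⌋ < N`) equal to `1 − ⌊1/P⌋P`, and all remaining components zero. -/
noncomputable def wvec (N : ℕ) (P : ℝ) : Fin N → ℝ := fun k =>
  if (k : ℕ) < ⌊1 / P⌋₊ then P
  else if (k : ℕ) = ⌊1 / P⌋₊ then 1 - (⌊1 / P⌋₊ : ℝ) * P
  else 0

/-- `p ≺ q`: `p` is majorized by `q`. (The sums of the `m` largest components of a vector
`v` coincide with the maxima, over subsets `s` of cardinality `m`, of `∑_{k∈s} v k`; this is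
the standard subset-sum characterization of majorization.) -/
def Majorizes {N : ℕ} (p q : Fin N → ℝ) : Prop :=
  (∑ k, p k = ∑ k, q k) ∧
  ∀ s : Finset (Fin N), ∃ t : Finset (Fin N), t.card = s.card ∧ ∑ k ∈ s, p k ≤ ∑ k ∈ t, q k

/-! In the concave case, replacing `φ` by `-φ` and `h` by `h ∘ Neg.neg` makes `φ` strictly convex
and `h` strictly decreasing, so it suffices to maximise `∑ₖ φ (p k)` over the polytope
`0 ≤ p k ≤ P`, `∑ₖ p k = 1`. If two coordinates lie strictly between `0` and `P`, pushing them
apart with their sum fixed until one of them reaches `0` or `P` strictly increases the sum and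
lowers the number of such coordinates. So the maximum is attained, and only attained, at points
with at most one coordinate in `(0, P)`; the mass condition forces such a point to have `⌊1/P⌋`
coordinates equal to `P` and the remaining mass `1 - ⌊1/P⌋ P` in one further coordinate, i.e. to
be a permutation of `wvec N P`. -/

open Finset
open Set (Icc Ico Ioo)

theorem StrictConvexOn.map_add_map_lt_of_lt_of_lt {s : Set ℝ} {φ : ℝ → ℝ}
    (hφ : StrictConvexOn ℝ s φ) {lo hi a b : ℝ} (hlo : lo ∈ s) (hhi : hi ∈ s)
    (hab : a + b = lo + hi) (hla : lo < a) (hah : a < hi) :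
    φ a + φ b < φ lo + φ hi := by
  have hd : 0 < hi - lo := by linarith
  set t := (hi - a) / (hi - lo)
  have ht0 : 0 < t := div_pos (by linarith) hd
  have ht1 : 0 < 1 - t := sub_pos.2 <| (div_lt_one hd).2 (by linarith)
  have ha : t • lo + (1 - t) • hi = a := by
    simp only [smul_eq_mul, t]; field_simp; ring
  have hb : (1 - t) • lo + t • hi = b := by
    rw [show b = lo + hi - a by linarith]; simp only [smul_eq_mul, t]; field_simp; ring
  have h₁ := hφ.2 hlo hhi (by linarith) ht0 ht1 (by ring)
  have h₂ := hφ.2 hlo hhi (by linarith) ht1 ht0 (by ring)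
  rw [ha] at h₁
  rw [hb] at h₂
  simp only [smul_eq_mul] at h₁ h₂
  linarith

theorem StrictConvexOn.exists_spread_pair {φ : ℝ → ℝ} (hφ : StrictConvexOn ℝ (Icc 0 1) φ)
    {P a b : ℝ} (hP1 : P ≤ 1) (ha : a ∈ Ioo 0 P) (hb : b ∈ Ioo 0 P) :
    ∃ x y, x ∈ Icc 0 P ∧ y ∈ Icc 0 P ∧ x + y = a + b ∧ y ∉ Ioo 0 P ∧
      φ a + φ b < φ x + φ y := by
  obtain ⟨ha0, haP⟩ := ha
  obtain ⟨hb0, hbP⟩ := hb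
  rcases le_or_gt (a + b) P with hs | hs
  · refine ⟨a + b, 0, ⟨by linarith, hs⟩, ⟨le_rfl, by linarith⟩, by ring, fun h => h.1.false, ?_⟩
    exact (hφ.map_add_map_lt_of_lt_of_lt ⟨le_rfl, zero_le_one⟩ ⟨by linarith, by linarith⟩
      (by ring) ha0 (by linarith)).trans_eq (add_comm _ _)
  · refine ⟨a + b - P, P, ⟨by linarith, by linarith⟩, ⟨by linarith, le_rfl⟩, by ring,
      fun h => h.2.false, ?_⟩
    exact hφ.map_add_map_lt_of_lt_of_lt ⟨by linarith, by linarith⟩ ⟨by linarith, hP1⟩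
      (by ring) (by linarith) haP

theorem sum_comp_update {ι α M : Type*} [Fintype ι] [DecidableEq ι] [AddCommGroup M]
    (g : α → M) (f : ι → α) (i : ι) (x : α) :
    ∑ k, g (Function.update f i x k) = ∑ k, g (f k) + (g x - g (f i)) := by
  simp_rw [Function.apply_update (fun _ => g)]
  rw [sum_update_of_mem (mem_univ i), ← add_sum_erase univ _ (mem_univ i),
    sdiff_singleton_eq_erase]
  abel

theorem sum_comp_eq_of_eq_comp_perm {ι α M : Type*} [Fintype ι] [AddCommMonoid M] (φ : α → M)
    {p q : ι → α} {σ : Equiv.Perm ι} (h : p = q ∘ σ) : ∑ k, φ (p k) = ∑ k, φ (q k) := by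
  subst h
  exact Equiv.sum_comp σ (fun k => φ (q k))

theorem sum_lt_of_card_le_one {ι : Type*} {s : Finset ι} (hs : #s ≤ 1) {f : ι → ℝ} {c : ℝ}
    (hc : 0 < c) (hf : ∀ k ∈ s, f k < c) : ∑ k ∈ s, f k < c := by
  obtain rfl | ⟨j, rfl⟩ := (Nat.le_one_iff_eq_zero_or_eq_one.1 hs).imp card_eq_zero.1
    card_eq_one.1
  · simpa
  · simpa using hf j (mem_singleton_self j)

theorem card_filter_eq_of_card_le_one {M : Type*} [AddCommMonoid M] [DecidableEq M]
    {ι : Type*} {s : Finset ι} (hs : #s ≤ 1) (f : ι → M) {a : M} (ha : a ≠ 0) :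
    #(s.filter (f · = a)) = if a = ∑ k ∈ s, f k then 1 else 0 := by
  obtain rfl | ⟨j, rfl⟩ := (Nat.le_one_iff_eq_zero_or_eq_one.1 hs).imp card_eq_zero.1
    card_eq_one.1
  · simp [ha]
  · by_cases h : f j = a <;> simp [filter_singleton, h, eq_comm (a := a)]

section Fibers

variable {ι α : Type*} [Fintype ι] [DecidableEq α]

theorem exists_perm_eq_comp_of_card_fiber_eq {p q : ι → α}
    (h : ∀ a, #(univ.filter (p · = a)) = #(univ.filter (q · = a))) :
    ∃ σ : Equiv.Perm ι, p = q ∘ σ := by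
  have e : ∀ a, {k // p k = a} ≃ {k // q k = a} := fun a =>
    Fintype.equivOfCardEq <| by simpa [Fintype.card_subtype] using h a
  refine ⟨(Equiv.sigmaFiberEquiv p).symm.trans
    ((Equiv.sigmaCongrRight e).trans (Equiv.sigmaFiberEquiv q)), funext fun k => ?_⟩
  exact ((e (p k)) ⟨k, rfl⟩).2.symm

theorem card_fiber_eq_of_forall_ne {p q : ι → α} {z : α}
    (h : ∀ a ≠ z, #(univ.filter (p · = a)) = #(univ.filter (q · = a))) (a : α) :
    #(univ.filter (p · = a)) = #(univ.filter (q · = a)) := by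
  rcases ne_or_eq a z with ha | rfl
  · exact h a ha
  set t := insert a (univ.image p ∪ univ.image q)
  have hp := card_eq_sum_card_fiberwise (s := univ) (t := t) (f := p) (by simp [t])
  have hq := card_eq_sum_card_fiberwise (s := univ) (t := t) (f := q) (by simp [t])
  rw [← add_sum_erase t _ (mem_insert_self _ _)] at hp hq
  rw [sum_congr rfl fun b hb => h b (ne_of_mem_erase hb)] at hp
  omega

end Fibers

theorem Nat.floor_one_div_eq_of_mul_add_eq {P t : ℝ} {n : ℕ} (hP : 0 < P) (ht : t ∈ Ico 0 P)
    (h : n * P + t = 1) : ⌊1 / P⌋₊ = n := by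
  rw [Nat.floor_eq_iff (by positivity), le_div_iff₀ hP, div_lt_iff₀ hP, add_mul]
  constructor <;> linarith [ht.1, ht.2]

theorem one_sub_floor_one_div_mul_mem_Ico {P : ℝ} (hP : 0 < P) :
    1 - ⌊1 / P⌋₊ * P ∈ Ico 0 P := by
  have h₁ := Nat.floor_le (one_div_pos.2 hP).le
  have h₂ := Nat.lt_floor_add_one (1 / P)
  rw [le_div_iff₀ hP] at h₁
  rw [div_lt_iff₀ hP, add_mul] at h₂
  constructor <;> linarith

section MidSet

variable {ι : Type*} [Fintype ι] {P : ℝ}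

def midSet (P : ℝ) (p : ι → ℝ) : Finset ι :=
  univ.filter fun k => p k ∈ Ioo 0 P

theorem mem_midSet {p : ι → ℝ} {k : ι} : k ∈ midSet P p ↔ p k ∈ Ioo 0 P := by
  simp [midSet]

theorem sum_eq_card_mul_add_sum_midSet {p : ι → ℝ} (hp : ∀ k, p k ∈ Icc 0 P) :
    ∑ k, p k = #(univ.filter (p · = P)) * P + ∑ k ∈ midSet P p, p k := by
  rw [← sum_filter_add_sum_filter_not univ (p · = P)]
  congr 1
  · rw [sum_congr rfl fun k hk => (mem_filter.1 hk).2, sum_const, nsmul_eq_mul]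
  · refine (sum_subset (fun k hk => ?_) fun k hk hkF => ?_).symm
    · exact mem_filter.2 ⟨mem_univ k, (mem_midSet.1 hk).2.ne⟩
    · have hkP := (mem_filter.1 hk).2
      rw [mem_midSet] at hkF
      by_contra hk0
      exact hkF ⟨(hp k).1.lt_of_ne' hk0, (hp k).2.lt_of_ne hkP⟩

theorem card_fiber_of_card_midSet_le_one (hP : 0 < P) {p : ι → ℝ} (hp : ∀ k, p k ∈ Icc 0 P)
    (hsum : ∑ k, p k = 1) (hmid : #(midSet P p) ≤ 1) {a : ℝ} (ha : a ≠ 0) :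
    #(univ.filter (p · = a)) =
      (if a = P then ⌊1 / P⌋₊ else 0) + if a = 1 - ⌊1 / P⌋₊ * P then 1 else 0 := by
  have hrem : ∑ k ∈ midSet P p, p k ∈ Ico 0 P :=
    ⟨sum_nonneg fun k _ => (hp k).1, sum_lt_of_card_le_one hmid hP fun k hk => (mem_midSet.1 hk).2⟩
  have hmass := (sum_eq_card_mul_add_sum_midSet hp).symm.trans hsum
  have hm := Nat.floor_one_div_eq_of_mul_add_eq hP hrem hmass
  have hr : 1 - ⌊1 / P⌋₊ * P = ∑ k ∈ midSet P p, p k := by rw [hm]; linarith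
  by_cases haP : a = P
  · subst haP
    rw [if_pos rfl, if_neg (one_sub_floor_one_div_mul_mem_Ico hP).2.ne', hm, add_zero]
  · rw [if_neg haP, zero_add, hr, ← card_filter_eq_of_card_le_one hmid p ha]
    congr 1
    ext k
    simp only [mem_filter, mem_univ, true_and, mem_midSet]
    refine ⟨fun h => ⟨?_, h⟩, And.right⟩
    rw [← h] at ha haP
    exact ⟨(hp k).1.lt_of_ne' ha, (hp k).2.lt_of_ne haP⟩

variable [DecidableEq ι] {φ : ℝ → ℝ}

theorem exists_spread (hφ : StrictConvexOn ℝ (Icc 0 1) φ) (hP1 : P ≤ 1)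
    {p : ι → ℝ} (hp : ∀ k, p k ∈ Icc 0 P) {i j : ι} (hij : i ≠ j)
    (hi : i ∈ midSet P p) (hj : j ∈ midSet P p) :
    ∃ q : ι → ℝ, (∀ k, q k ∈ Icc 0 P) ∧ ∑ k, q k = ∑ k, p k ∧
      #(midSet P q) < #(midSet P p) ∧ ∑ k, φ (p k) < ∑ k, φ (q k) := by
  obtain ⟨x, y, hx, hy, hxy, hy_end, hφxy⟩ :=
    hφ.exists_spread_pair hP1 (mem_midSet.1 hi) (mem_midSet.1 hj)
  set q := Function.update (Function.update p i x) j y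
  have hq : ∀ k, k ≠ i → k ≠ j → q k = p k := fun k hki hkj => by
    simp [q, Function.update_of_ne hki, Function.update_of_ne hkj]
  have hqi : q i = x := by simp [q, Function.update_of_ne hij]
  have hqj : q j = y := by simp [q]
  have hsum : ∀ g : ℝ → ℝ, ∑ k, g (q k) = ∑ k, g (p k) + (g x - g (p i)) + (g y - g (p j)) :=
    fun g => by
      rw [sum_comp_update, sum_comp_update, Function.update_of_ne hij.symm]
  refine ⟨q, fun k => ?_, ?_, ?_, ?_⟩
  · by_cases hki : k = i; · rwa [hki, hqi]
    by_cases hkj : k = j; · rwa [hkj, hqj]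
    rw [hq k hki hkj]; exact hp k
  · linarith [hsum fun t => t]
  · refine (card_le_card fun k hk => ?_).trans_lt (card_erase_lt_of_mem hj)
    rw [mem_midSet] at hk
    have hkj : k ≠ j := by rintro rfl; exact hy_end (hqj ▸ hk)
    refine mem_erase.2 ⟨hkj, mem_midSet.2 ?_⟩
    by_cases hki : k = i
    · rw [hki]; exact mem_midSet.1 hi
    · rwa [← hq k hki hkj]
  · rw [hsum φ]; linarith

theorem sum_le_of_forall_card_midSet_le_one (hφ : StrictConvexOn ℝ (Icc 0 1) φ) (hP1 : P ≤ 1)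
    {V : ℝ} (hbase : ∀ q : ι → ℝ, (∀ k, q k ∈ Icc 0 P) → ∑ k, q k = 1 →
      #(midSet P q) ≤ 1 → ∑ k, φ (q k) ≤ V)
    (p : ι → ℝ) (hp : ∀ k, p k ∈ Icc 0 P) (hsum : ∑ k, p k = 1) :
    ∑ k, φ (p k) ≤ V := by
  by_cases hmid : #(midSet P p) ≤ 1
  · exact hbase p hp hsum hmid
  obtain ⟨i, hi, j, hj, hij⟩ := one_lt_card.1 (not_le.1 hmid)
  obtain ⟨q, hq, hqsum, hcard, hlt⟩ := exists_spread hφ hP1 hp hij hi hj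
  exact hlt.le.trans (sum_le_of_forall_card_midSet_le_one hφ hP1 hbase q hq (hqsum.trans hsum))
termination_by #(midSet P p)

theorem sum_lt_of_one_lt_card_midSet (hφ : StrictConvexOn ℝ (Icc 0 1) φ) (hP1 : P ≤ 1)
    {V : ℝ} (hbase : ∀ q : ι → ℝ, (∀ k, q k ∈ Icc 0 P) → ∑ k, q k = 1 →
      #(midSet P q) ≤ 1 → ∑ k, φ (q k) ≤ V)
    {p : ι → ℝ} (hp : ∀ k, p k ∈ Icc 0 P) (hsum : ∑ k, p k = 1) (hmid : 1 < #(midSet P p)) :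
    ∑ k, φ (p k) < V := by
  obtain ⟨i, hi, j, hj, hij⟩ := one_lt_card.1 hmid
  obtain ⟨q, hq, hqsum, -, hlt⟩ := exists_spread hφ hP1 hp hij hi hj
  exact hlt.trans_le (sum_le_of_forall_card_midSet_le_one hφ hP1 hbase q hq (hqsum.trans hsum))

end MidSet

section Wvec

variable {N : ℕ} {P : ℝ}

theorem wvec_mem_Icc (hP : 0 < P) (k : Fin N) : wvec N P k ∈ Icc 0 P := by
  have hr := one_sub_floor_one_div_mul_mem_Ico hP
  unfold wvec
  split_ifs
  exacts [⟨hP.le, le_rfl⟩, ⟨hr.1, hr.2.le⟩, ⟨le_rfl, hP.le⟩]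

theorem card_midSet_wvec_le_one : #(midSet P (wvec N P)) ≤ 1 := by
  have h : ∀ k ∈ midSet P (wvec N P), (k : ℕ) = ⌊1 / P⌋₊ := fun k hk => by
    have hk := mem_midSet.1 hk
    unfold wvec at hk
    split_ifs at hk with h₁ h₂
    exacts [absurd hk.2 (lt_irrefl P), h₂, absurd hk.1 (lt_irrefl 0)]
  exact card_le_one.2 fun i hi j hj => Fin.ext ((h i hi).trans (h j hj).symm)

theorem sum_comp_wvec (hNP : 1 ≤ N * P) {g : ℝ → ℝ} (hg : g 0 = 0) :
    ∑ k, g (wvec N P k) = ⌊1 / P⌋₊ * g P + g (1 - ⌊1 / P⌋₊ * P) := by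
  have hP : 0 < P := pos_of_mul_pos_right (by linarith) N.cast_nonneg
  set m := ⌊1 / P⌋₊
  have hmN : m ≤ N := Nat.floor_le_of_le ((div_le_iff₀ hP).2 (by linarith))
  have hrN : N ≤ m → 1 - m * P = 0 := fun h => by
    have := (one_sub_floor_one_div_mul_mem_Ico hP).1
    have : (N : ℝ) * P ≤ m * P := by gcongr
    linarith
  have hsplit : ∀ k : ℕ, g (if k < m then P else if k = m then 1 - m * P else 0) =
      (if k < m then g P else 0) + if k = m then g (1 - m * P) else 0 := fun k => by
    split_ifs <;> first | omega | simp [hg]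
  unfold wvec
  rw [Fin.sum_univ_eq_sum_range
      (fun k => g (if k < m then P else if k = m then 1 - m * P else 0)) N,
    sum_congr rfl fun k _ => hsplit k, sum_add_distrib, sum_ite_eq', ← sum_filter,
    show (range N).filter (· < m) = range m by ext; simp; omega, sum_const, card_range,
    nsmul_eq_mul]
  rcases lt_or_ge m N with h | h
  · rw [if_pos (mem_range.2 h)]
  · rw [if_neg (by simpa using h), hrN h, hg]

theorem sum_wvec (hNP : 1 ≤ N * P) : ∑ k, wvec N P k = 1 := by
  simpa using sum_comp_wvec hNP (g := id) rfl

theorem iSup_wvec (hN : 0 < N) (hP : 0 < P) (hP1 : P ≤ 1) : ⨆ k, wvec N P k = P := by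
  have h0 : wvec N P ⟨0, hN⟩ = P := if_pos (Nat.le_floor (by simpa using one_le_one_div hP hP1))
  have : Nonempty (Fin N) := ⟨⟨0, hN⟩⟩
  exact le_antisymm (ciSup_le fun k => (wvec_mem_Icc hP k).2)
    (h0.symm.le.trans (le_ciSup (Set.finite_range _).bddAbove _))

variable {p : Fin N → ℝ} {φ : ℝ → ℝ}

theorem exists_perm_eq_wvec_comp (hNP : 1 ≤ N * P) (hp : ∀ k, p k ∈ Icc 0 P)
    (hsum : ∑ k, p k = 1) (hmid : #(midSet P p) ≤ 1) :
    ∃ σ : Equiv.Perm (Fin N), p = wvec N P ∘ σ := by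
  have hP : 0 < P := pos_of_mul_pos_right (by linarith) N.cast_nonneg
  refine exists_perm_eq_comp_of_card_fiber_eq (card_fiber_eq_of_forall_ne (z := 0) fun a ha => ?_)
  rw [card_fiber_of_card_midSet_le_one hP hp hsum hmid ha, card_fiber_of_card_midSet_le_one hP
    (wvec_mem_Icc hP) (sum_wvec hNP) card_midSet_wvec_le_one ha]

theorem sum_le_sum_comp_wvec (hφ : StrictConvexOn ℝ (Icc 0 1) φ) (hP1 : P ≤ 1)
    (hNP : 1 ≤ N * P) (hp : ∀ k, p k ∈ Icc 0 P) (hsum : ∑ k, p k = 1) :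
    ∑ k, φ (p k) ≤ ∑ k, φ (wvec N P k) :=
  sum_le_of_forall_card_midSet_le_one hφ hP1 (fun _ hq hqsum hmid =>
    (exists_perm_eq_wvec_comp hNP hq hqsum hmid).elim fun _ hσ =>
      (sum_comp_eq_of_eq_comp_perm φ hσ).le) p hp hsum

theorem sum_comp_eq_sum_comp_wvec_iff (hφ : StrictConvexOn ℝ (Icc 0 1) φ) (hP1 : P ≤ 1)
    (hNP : 1 ≤ N * P) (hp : ∀ k, p k ∈ Icc 0 P) (hsum : ∑ k, p k = 1) :
    ∑ k, φ (p k) = ∑ k, φ (wvec N P k) ↔ ∃ σ : Equiv.Perm (Fin N), p = wvec N P ∘ σ := by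
  refine ⟨fun h => ?_, fun ⟨_, hσ⟩ => sum_comp_eq_of_eq_comp_perm φ hσ⟩
  refine exists_perm_eq_wvec_comp hNP hp hsum (not_lt.1 fun hmid => h.not_lt ?_)
  exact sum_lt_of_one_lt_card_midSet hφ hP1
    (fun _ hq hqsum _ => sum_le_sum_comp_wvec hφ hP1 hNP hq hqsum) hp hsum hmid

end Wvec

namespace EntropicPair

theorem exists_strictConvexOn_strictAnti (e : EntropicPair) :
    ∃ ψ g : ℝ → ℝ, StrictConvexOn ℝ (Icc 0 1) ψ ∧ StrictAnti g ∧
      ∀ {ι : Type} [Fintype ι] (p : ι → ℝ), e.H p = g (∑ k, ψ (p k)) := by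
  rcases e.admissible with ⟨hφ, hh⟩ | ⟨hφ, hh⟩
  · exact ⟨-e.phi, e.h ∘ Neg.neg, hφ.neg, hh.comp_strictAnti fun _ _ h => neg_lt_neg h,
      fun p => by simp [H]⟩
  · exact ⟨e.phi, e.h, hφ, hh, fun _ => rfl⟩

variable (e : EntropicPair) {N : ℕ} {P : ℝ} {p : Fin N → ℝ}

theorem H_wvec (hNP : 1 ≤ N * P) : e.H (wvec N P) = e.Hmin P := by
  rw [H, sum_comp_wvec hNP e.phi_zero, Hmin]

theorem H_wvec_le (hP1 : P ≤ 1) (hNP : 1 ≤ N * P) (hp : ∀ k, p k ∈ Icc 0 P)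
    (hsum : ∑ k, p k = 1) : e.H (wvec N P) ≤ e.H p := by
  obtain ⟨ψ, g, hψ, hg, hH⟩ := e.exists_strictConvexOn_strictAnti
  rw [hH, hH]
  exact hg.antitone (sum_le_sum_comp_wvec hψ hP1 hNP hp hsum)

theorem H_eq_H_wvec_iff (hP1 : P ≤ 1) (hNP : 1 ≤ N * P) (hp : ∀ k, p k ∈ Icc 0 P)
    (hsum : ∑ k, p k = 1) :
    e.H p = e.H (wvec N P) ↔ ∃ σ : Equiv.Perm (Fin N), p = wvec N P ∘ σ := by
  obtain ⟨ψ, g, hψ, hg, hH⟩ := e.exists_strictConvexOn_strictAnti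
  rw [hH, hH, hg.injective.eq_iff]
  exact sum_comp_eq_sum_comp_wvec_iff hψ hP1 hNP hp hsum

end EntropicPair

/-- The minimum of `H_{(h,φ)}` over probability vectors with maximal component
`P` equals `h(⌊1/P⌋φ(P) + φ(1−⌊1/P⌋P))`, attained exactly at the permutations of `wvec N P`. -/
theorem min_entropy_fixed_max_component (e : EntropicPair) {N : ℕ} (hN : 2 ≤ N)
    (P : ℝ) (hP : P ∈ Set.Icc (1 / (N : ℝ)) 1) :
    IsLeast { x : ℝ | ∃ p : Fin N → ℝ, IsProbVec p ∧ (⨆ k, p k) = P ∧ x = e.H p }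
      (e.h ((⌊1 / P⌋₊ : ℝ) * e.phi P + e.phi (1 - (⌊1 / P⌋₊ : ℝ) * P))) ∧
    ∀ p : Fin N → ℝ, IsProbVec p → (⨆ k, p k) = P →
      (e.H p = e.h ((⌊1 / P⌋₊ : ℝ) * e.phi P + e.phi (1 - (⌊1 / P⌋₊ : ℝ) * P)) ↔
        ∃ σ : Equiv.Perm (Fin N), p = wvec N P ∘ σ) := by
  obtain ⟨hNP, hP1⟩ := hP
  have hN0 : 0 < N := by omega
  rw [div_le_iff₀' (by positivity)] at hNP
  have hP0 : 0 < P := pos_of_mul_pos_right (by linarith) N.cast_nonneg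
  have hbounds : ∀ p : Fin N → ℝ, IsProbVec p → (⨆ k, p k) = P → ∀ k, p k ∈ Icc 0 P :=
    fun p hp hsup k => ⟨hp.1 k, hsup ▸ le_ciSup (Set.finite_range p).bddAbove k⟩
  rw [← EntropicPair.Hmin, ← e.H_wvec hNP]
  refine ⟨⟨⟨wvec N P, ⟨fun k => (wvec_mem_Icc hP0 k).1, sum_wvec hNP⟩, iSup_wvec hN0 hP0 hP1, rfl⟩,
    ?_⟩, fun p hp hsup => e.H_eq_H_wvec_iff hP1 hNP (hbounds p hp hsup) hp.2⟩
  rintro _ ⟨p, hp, hsup, rfl⟩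
  exact e.H_wvec_le hP1 hNP (hbounds p hp hsup) hp.2
end
end

section
/- Let N ≥ 2 and P ∈ [1/N, 1], and let w(P) be the N-dimensional probability vector having its first ⌊1/P⌋ components equal to P, its next component (present when ⌊1/P⌋ < N) equal to 1 − ⌊1/P⌋ P, and all remaining components equal to zero. Then every probability vector p = (p_1,…,p_N) with max_k p_k = P is majorized by w(P), i.e., p ≺ w(P). -/
open scoped BigOperators

noncomputable section

/-- Every probability vector with maximal component `P` is majorized by
the vector `wvec N P`. -/
theorem probVec_majorized_by_wvec {N : ℕ} (hN : 2 ≤ N) (P : ℝ)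
    (hP : P ∈ Set.Icc (1 / (N : ℝ)) 1)
    (p : Fin N → ℝ) (hp : IsProbVec p) (hmax : (⨆ k, p k) = P) :
    Majorizes p (wvec N P) := by
  obtain ⟨hPlow, hP1⟩ := hP
  have hNpos : (0:ℝ) < N := by positivity
  have hPpos : (0:ℝ) < P := lt_of_lt_of_le (by positivity) hPlow
  set f : ℕ := ⌊1 / P⌋₊ with hf
  have hfP : (f:ℝ) * P ≤ 1 := by
    have h1 : (f:ℝ) ≤ 1 / P := Nat.floor_le (by positivity)
    calc (f:ℝ) * P ≤ (1/P) * P := by nlinarith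
    _ = 1 := by field_simp
  have h1fP : 1 < ((f:ℝ) + 1) * P := by
    have h1 : 1 / P < (f:ℝ) + 1 := Nat.lt_floor_add_one _
    have := mul_lt_mul_of_pos_right h1 hPpos
    calc (1:ℝ) = (1/P) * P := by field_simp
    _ < ((f:ℝ)+1) * P := this
  have hfN : f ≤ N := by
    have h2 : (1:ℝ)/P ≤ N := by
      rw [div_le_iff₀ hPpos]
      calc (1:ℝ) = (N:ℝ) * (1/N) := by field_simp
      _ ≤ (N:ℝ) * P := by nlinarith
    calc f ≤ ⌊(N:ℝ)⌋₊ := Nat.floor_mono h2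
    _ = N := Nat.floor_natCast N
  have hNP : 1 ≤ (N:ℝ) * P := by
    calc (1:ℝ) = (N:ℝ) * (1/N) := by field_simp
    _ ≤ (N:ℝ) * P := by nlinarith
  have hple : ∀ k, p k ≤ P := by
    intro k
    rw [← hmax]
    exact le_ciSup (Set.Finite.bddAbove (Set.finite_range p)) k
  -- key sum computation
  have key : ∀ m : ℕ, m ≤ N →
      ∑ k ∈ Finset.univ.filter (fun k : Fin N => (k:ℕ) < m), wvec N P k
        = min ((m:ℝ) * P) 1 := by
    intro m hm
    induction m with
    | zero => simp
    | succ n ih =>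
      have hnN : n < N := hm
      have hstep : Finset.univ.filter (fun k : Fin N => (k:ℕ) < n + 1)
          = insert (⟨n, hnN⟩ : Fin N) (Finset.univ.filter (fun k : Fin N => (k:ℕ) < n)) := by
        ext k
        simp only [Finset.mem_filter, Finset.mem_univ, true_and, Finset.mem_insert,
          Fin.ext_iff]
        omega
      have hnotmem : (⟨n, hnN⟩ : Fin N) ∉ Finset.univ.filter (fun k : Fin N => (k:ℕ) < n) := by
        simp
      rw [hstep, Finset.sum_insert hnotmem, ih (le_of_lt hnN)]
      rcases lt_trichotomy n f with h | h | h
      · -- wvec at n is P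
        have hw : wvec N P ⟨n, hnN⟩ = P := if_pos h
        have hn1f : (n:ℝ) + 1 ≤ (f:ℝ) := by exact_mod_cast h
        have hnn : (n:ℝ) * P ≤ 1 := by nlinarith
        have hnn2 : ((n:ℝ) + 1) * P ≤ 1 := by nlinarith
        rw [hw, min_eq_left hnn, min_eq_left (by push_cast; linarith)]
        push_cast; ring
      · -- n = f
        have hw : wvec N P ⟨n, hnN⟩ = 1 - (f:ℝ) * P := by
          unfold wvec
          rw [if_neg (show ¬ n < ⌊1/P⌋₊ by rw [← hf]; omega),
            if_pos (show n = ⌊1/P⌋₊ by rw [← hf]; exact h), ← hf]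
        have hnn : (n:ℝ) * P ≤ 1 := by rw [h]; exact hfP
        have h2 : (1:ℝ) ≤ ((n:ℕ) + 1 : ℝ) * P := by
          push_cast; rw [h]; linarith
        rw [hw, min_eq_left hnn, min_eq_right (by push_cast at h2 ⊢; linarith)]
        rw [h]; ring
      · -- n > f : wvec is 0, and min already 1
        have hw : wvec N P ⟨n, hnN⟩ = 0 := by
          unfold wvec
          rw [if_neg (show ¬ n < ⌊1/P⌋₊ by rw [← hf]; omega),
            if_neg (show ¬ n = ⌊1/P⌋₊ by rw [← hf]; omega)]
        have hnn : 1 ≤ (n:ℝ) * P := by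
          have : (f:ℝ) + 1 ≤ (n:ℝ) := by exact_mod_cast h
          nlinarith
        have hnn2 : 1 ≤ (((n:ℕ)+1:ℝ)) * P := by push_cast; nlinarith
        rw [hw, min_eq_right hnn, min_eq_right (by push_cast at hnn2 ⊢; linarith)]
        ring
  have cardkey : ∀ m : ℕ, m ≤ N →
      (Finset.univ.filter (fun k : Fin N => (k:ℕ) < m)).card = m := by
    intro m hm
    have : Finset.univ.filter (fun k : Fin N => (k:ℕ) < m)
        = (Finset.range m).attachFin (fun x hx => lt_of_lt_of_le (Finset.mem_range.mp hx) hm) := by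
      ext k
      simp [Finset.mem_attachFin]
    rw [this, Finset.card_attachFin, Finset.card_range]
  obtain ⟨hp0, hp1⟩ := hp
  constructor
  · -- total sums equal
    have huniv : Finset.univ.filter (fun k : Fin N => (k:ℕ) < N) = Finset.univ := by
      ext k; simp [k.isLt]
    have := key N le_rfl
    rw [huniv] at this
    rw [hp1, this, min_eq_right hNP]
  · intro s
    refine ⟨Finset.univ.filter (fun k : Fin N => (k:ℕ) < s.card), ?_, ?_⟩
    · exact cardkey s.card (le_trans (Finset.card_le_univ s) (by simp))
    · rw [key s.card (le_trans (Finset.card_le_univ s) (by simp))]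
      refine le_min ?_ ?_
      · calc ∑ k ∈ s, p k ≤ ∑ k ∈ s, P := Finset.sum_le_sum (fun k _ => hple k)
        _ = (s.card : ℝ) * P := by rw [Finset.sum_const, nsmul_eq_mul]
      · calc ∑ k ∈ s, p k ≤ ∑ k, p k :=
          Finset.sum_le_sum_of_subset_of_nonneg (Finset.subset_univ s) (fun k _ _ => hp0 k)
        _ = 1 := hp1
end
end

section
/- Let N ≥ 2, P ∈ (1/N, 1], and M = ⌊1/P⌋ (so 1 ≤ M ≤ N−1). The set of extreme points of the convex polytope PT_P = { q ∈ ℝ^{N−1} : 0 ≤ q_k ≤ P for all k, Σ_{k=1}^{N−1} q_k = 1−P } is exactly the set of vectors obtained by permuting the coordinates of the (N−1)-dimensional vector having M−1 components equal to P, one component equal to 1 − M P, and N−M−1 components equal to zero; in particular each edge of the hypercube [0, P]^{N−1} contains at most one vertex of PT_P. -/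
/-!
A point `q` of the slice `{q ∈ [0, P]ⁿ | ∑ q = S}` is extreme exactly when at most one of its
coordinates lies strictly between `0` and `P`. Two such coordinates could be pushed in opposite
directions by a small amount, staying in the slice. Conversely, each remaining coordinate is an
extreme point of `[0, P]`, hence is fixed along any open segment through `q`, and the sum then
fixes the last one.

For `S = 1 - P` such a point has `m` coordinates equal to `P`, one coordinate `r ∈ [0, P)` and
zeros elsewhere, with `(m + 1) P + r = 1`. Hence `m + 1 = ⌊1/P⌋` and `r = 1 - ⌊1/P⌋ P`, so the
point is a permutation of `v`.
-/

open Finset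

section Extreme

variable {𝕜 E : Type*} [Field 𝕜] [LinearOrder 𝕜] [IsStrictOrderedRing 𝕜] [AddCommGroup E]
  [Module 𝕜 E]

theorem eq_zero_of_mem_extremePoints_of_add_mem_of_sub_mem {A : Set E} {x d : E}
    (hx : x ∈ Set.extremePoints 𝕜 A) (hadd : x + d ∈ A) (hsub : x - d ∈ A) : d = 0 := by
  have hseg : x ∈ openSegment 𝕜 (x + d) (x - d) :=
    ⟨1 / 2, 1 / 2, by norm_num, by norm_num, by norm_num, by module⟩
  simpa using hx.2 hadd hsub hseg

end Extreme

theorem eq_of_sum_eq_of_eq_off_subsingleton {ι M : Type*} [Fintype ι] [AddCommGroup M]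
    {x y : ι → M} {s : Set ι} (hs : s.Subsingleton) (hoff : ∀ k ∉ s, x k = y k)
    (hsum : ∑ k, x k = ∑ k, y k) : x = y := by
  classical
  rcases hs.eq_empty_or_singleton with rfl | ⟨k₀, rfl⟩
  · exact funext fun k => hoff k (Set.notMem_empty k)
  have hrest : ∑ k ∈ univ.erase k₀, x k = ∑ k ∈ univ.erase k₀, y k :=
    sum_congr rfl fun k hk => hoff k (ne_of_mem_erase hk)
  have hk₀ : x k₀ = y k₀ := by
    rw [← add_sum_erase _ _ (mem_univ k₀), ← add_sum_erase _ _ (mem_univ k₀), hrest] at hsum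
    exact add_right_cancel hsum
  funext k
  by_cases hk : k = k₀
  · rw [hk, hk₀]
  · exact hoff k hk

theorem exists_perm_comp_eq {α β γ : Type*} [Finite α] [Zero γ] {f g : α → β}
    (hf : Function.Injective f) (hg : Function.Injective g) {x y : β → γ}
    (hxy : ∀ a, x (f a) = y (g a)) (hx : ∀ b ∉ Set.range f, x b = 0)
    (hy : ∀ b ∉ Set.range g, y b = 0) : ∃ σ : Equiv.Perm β, x = y ∘ σ := by
  obtain ⟨σ, hσ⟩ := Equiv.Perm.exists_extending_pair f g hf hg
  refine ⟨σ, funext fun b => ?_⟩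
  by_cases hb : b ∈ Set.range f
  · obtain ⟨a, rfl⟩ := hb
    rw [Function.comp_apply, hσ, hxy]
  · rw [hx b hb, Function.comp_apply, hy]
    rintro ⟨a, ha⟩
    exact hb ⟨a, σ.injective (by rw [hσ, ha])⟩

theorem Nat.floor_div_eq_of_eq_mul_add {x P r : ℝ} {m : ℕ} (hP : 0 < P) (hr₀ : 0 ≤ r)
    (hrP : r < P) (hx : x = m * P + r) : ⌊x / P⌋₊ = m := by
  rw [Nat.floor_eq_iff (div_nonneg (by rw [hx]; positivity) hP.le), le_div_iff₀ hP,
    div_lt_iff₀ hP]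
  constructor <;> linarith

section BoxSlice

variable {ι : Type*} [Fintype ι]

def boxSlice (P S : ℝ) : Set (ι → ℝ) :=
  {q | (∀ k, 0 ≤ q k ∧ q k ≤ P) ∧ ∑ k, q k = S}

variable {P S : ℝ} {q : ι → ℝ}

theorem add_smul_single_sub_single_mem_boxSlice [DecidableEq ι] (hq : q ∈ boxSlice P S)
    {i j : ι} (hij : i ≠ j) {t : ℝ} (hi : q i + t ∈ Set.Icc 0 P) (hj : q j - t ∈ Set.Icc 0 P) :
    q + t • (Pi.single i 1 - Pi.single j 1) ∈ boxSlice P S := by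
  refine ⟨fun k => ?_, ?_⟩
  · by_cases hki : k = i
    · subst hki; simpa [hij] using hi
    by_cases hkj : k = j
    · subst hkj; simpa [hki, sub_eq_add_neg] using hj
    simpa [hki, hkj] using hq.1 k
  · simp [sum_add_distrib, ← mul_sum, hq.2]

theorem subsingleton_of_mem_extremePoints_boxSlice
    (hq : q ∈ Set.extremePoints ℝ (boxSlice P S)) : {k | q k ∈ Set.Ioo 0 P}.Subsingleton := by
  classical
  intro i hi j hj
  by_contra hij
  set δ := min (min (q i) (P - q i)) (min (q j) (P - q j))
  have hδ : 0 < δ := by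
    simp only [δ, lt_min_iff, sub_pos]
    exact ⟨hi, hj⟩
  have hδi : δ ≤ q i ∧ δ ≤ P - q i := ⟨by simp [δ], by simp [δ]⟩
  have hδj : δ ≤ q j ∧ δ ≤ P - q j := ⟨by simp [δ], by simp [δ]⟩
  set d : ι → ℝ := δ • (Pi.single i 1 - Pi.single j 1)
  have hadd : q + d ∈ boxSlice P S :=
    add_smul_single_sub_single_mem_boxSlice hq.1 hij ⟨by linarith, by linarith⟩
      ⟨by linarith, by linarith⟩
  have hsub : q - d ∈ boxSlice P S := by
    rw [sub_eq_add_neg, ← neg_smul]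
    exact add_smul_single_sub_single_mem_boxSlice hq.1 hij ⟨by linarith, by linarith⟩
      ⟨by linarith, by linarith⟩
  have hdi : d i = δ := by simp [d, hij]
  rw [eq_zero_of_mem_extremePoints_of_add_mem_of_sub_mem hq hadd hsub, Pi.zero_apply] at hdi
  exact hδ.ne hdi

theorem mem_extremePoints_boxSlice_of_subsingleton (hq : q ∈ boxSlice P S)
    (hfrac : {k | q k ∈ Set.Ioo 0 P}.Subsingleton) : q ∈ Set.extremePoints ℝ (boxSlice P S) := by
  refine ⟨hq, fun x hx y hy hseg => ?_⟩
  refine eq_of_sum_eq_of_eq_off_subsingleton hfrac (fun k hk => ?_) (by rw [hx.2, hq.2])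
  have hP : 0 ≤ P := (hq.1 k).1.trans (hq.1 k).2
  have hqk : q k ∈ Set.extremePoints ℝ (Set.Icc 0 P) := by
    rw [Set.extremePoints_Icc hP, ← Set.Icc_sdiff_Ioo_same hP]
    exact ⟨hq.1 k, hk⟩
  exact hqk.2 (hx.1 k) (hy.1 k) (Pi.openSegment_subset x y hseg k (Set.mem_univ k))

theorem mem_extremePoints_boxSlice_iff :
    q ∈ Set.extremePoints ℝ (boxSlice P S) ↔
      q ∈ boxSlice P S ∧ {k | q k ∈ Set.Ioo 0 P}.Subsingleton :=
  ⟨fun hq => ⟨hq.1, subsingleton_of_mem_extremePoints_boxSlice hq⟩,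
    fun hq => mem_extremePoints_boxSlice_of_subsingleton hq.1 hq.2⟩

theorem comp_perm_mem_extremePoints_boxSlice (hq : q ∈ Set.extremePoints ℝ (boxSlice P S))
    (σ : Equiv.Perm ι) : q ∘ σ ∈ Set.extremePoints ℝ (boxSlice P S) := by
  rw [mem_extremePoints_boxSlice_iff] at hq ⊢
  obtain ⟨⟨hbox, hsum⟩, hfrac⟩ := hq
  exact ⟨⟨fun k => hbox (σ k), by rw [← hsum]; exact Equiv.sum_comp σ q⟩,
    hfrac.preimage σ.injective⟩

variable [DecidableEq ι]

def stairVector (A : Finset ι) (i : ι) (a c : ℝ) : ι → ℝ :=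
  fun k => if k ∈ A then a else if k = i then c else 0

theorem sum_stairVector {A : Finset ι} {i : ι} (hi : i ∉ A) (a c : ℝ) :
    ∑ k, stairVector A i a c k = #A * a + c := by
  simp [stairVector, sum_ite, filter_not, hi]

theorem exists_perm_stairVector_eq {A B : Finset ι} {i j : ι} (hi : i ∉ A) (hj : j ∉ B)
    (hAB : #A = #B) (a c : ℝ) :
    ∃ σ : Equiv.Perm ι, stairVector A i a c = stairVector B j a c ∘ σ := by
  set e := A.equivOfCardEq hAB
  refine exists_perm_comp_eq (f := fun o : Option A => o.elim i Subtype.val)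
    (g := fun o : Option A => o.elim j fun a => (e a : ι))
    (Option.injective_iff.2 ⟨Subtype.val_injective, by simpa using hi⟩)
    (Option.injective_iff.2 ⟨Subtype.val_injective.comp e.injective, by
      rintro ⟨a, ha⟩
      simp only [Function.comp_apply, Option.elim_some, Option.elim_none] at ha
      exact hj (ha ▸ (e a).2)⟩)
    ?_ ?_ ?_
  · rintro (_ | a)
    · simp [stairVector, hi, hj]
    · simp [stairVector, (e a).2]
  · intro b hb
    have hbA : b ∉ A := fun h => hb ⟨some ⟨b, h⟩, rfl⟩
    have hbi : b ≠ i := fun h => hb ⟨none, h.symm⟩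
    simp [stairVector, hbA, hbi]
  · intro b hb
    have hbB : b ∉ B := fun h => hb ⟨some (e.symm ⟨b, h⟩), by simp⟩
    have hbj : b ≠ j := fun h => hb ⟨none, h.symm⟩
    simp [stairVector, hbB, hbj]

theorem stairVector_mem_extremePoints_boxSlice {A : Finset ι} {i : ι} (hi : i ∉ A) {c : ℝ}
    (hc : c ∈ Set.Icc 0 P) (hS : #A * P + c = S) :
    stairVector A i P c ∈ Set.extremePoints ℝ (boxSlice P S) := by
  have hP : 0 ≤ P := hc.1.trans hc.2
  refine mem_extremePoints_boxSlice_of_subsingleton ⟨fun k => ?_, by rw [sum_stairVector hi, hS]⟩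
    ((Set.subsingleton_singleton (a := i)).anti fun k hk => ?_)
  · unfold stairVector
    split_ifs
    exacts [⟨hP, le_rfl⟩, hc, ⟨le_rfl, hP⟩]
  · by_contra hki
    simp only [Set.mem_ofPred_eq, stairVector, Set.mem_singleton_iff] at hk hki
    split_ifs at hk <;> simp_all

theorem exists_eq_stairVector (hP : 0 < P) (hι : 1 < (Fintype.card ι + 1) * P)
    (hq : q ∈ boxSlice P (1 - P)) (hfrac : {k | q k ∈ Set.Ioo 0 P}.Subsingleton) :
    ∃ (A : Finset ι) (i : ι), i ∉ A ∧ #A + 1 = ⌊1 / P⌋₊ ∧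
      q = stairVector A i P (1 - ⌊1 / P⌋₊ * P) := by
  set A := univ.filter fun k => q k = P
  have hA : ∀ k, k ∈ A ↔ q k = P := by simp [A]
  have hzero : ∀ k ∉ A, q k ∉ Set.Ioo 0 P → q k = 0 := fun k hkA hk => by
    by_contra h
    exact hk ⟨(hq.1 k).1.lt_of_ne' h, (hq.1 k).2.lt_of_ne (mt (hA k).2 hkA)⟩
  obtain ⟨i, hiA, hoff⟩ : ∃ i ∉ A, ∀ k ∉ A, k ≠ i → q k = 0 := by
    by_cases hex : ∃ i, q i ∈ Set.Ioo 0 P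
    · obtain ⟨i, hi⟩ := hex
      exact ⟨i, fun h => hi.2.ne ((hA i).1 h),
        fun k hkA hki => hzero k hkA fun hk => hki (hfrac hk hi)⟩
    · push Not at hex
      obtain ⟨i, hi⟩ : ∃ i, i ∉ A := by
        by_contra! hall
        have hsum : ∑ k, q k = Fintype.card ι * P := by simp [(hA _).1 (hall _)]
        linarith [hq.2]
      exact ⟨i, hi, fun k hkA _ => hzero k hkA (hex k)⟩
  have hqi : q i ∈ Set.Ico 0 P := ⟨(hq.1 i).1, (hq.1 i).2.lt_of_ne (mt (hA i).2 hiA)⟩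
  have hstair : q = stairVector A i P (q i) := by
    funext k
    unfold stairVector
    split_ifs with hkA hki
    · exact (hA k).1 hkA
    · rw [hki]
    · exact hoff k hkA hki
  have hsum : 1 = (#A + 1 : ℕ) * P + q i := by
    have := hq.2
    rw [hstair, sum_stairVector hiA] at this
    push_cast
    linarith
  have hM : ⌊1 / P⌋₊ = #A + 1 := Nat.floor_div_eq_of_eq_mul_add hP hqi.1 hqi.2 hsum
  refine ⟨A, i, hiA, hM.symm, ?_⟩
  nth_rewrite 1 [hstair]
  congr 1
  rw [hM]
  push_cast at hsum ⊢
  linarith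

end BoxSlice

/-- For `N ≥ 2`, `P ∈ (1/N, 1]` and `M = ⌊1/P⌋`, the extreme points of the
polytope `PT_P = {q ∈ ℝ^{N−1} : 0 ≤ q_k ≤ P, Σ q_k = 1−P}` are exactly the permutations of
the vector with `M−1` components equal to `P`, one equal to `1 − MP`, and the rest zero;
in particular, each edge of the hypercube `[0,P]^{N−1}` contains at most one vertex of `PT_P`. -/
theorem extremePoints_of_polytope {N : ℕ} (hN : 2 ≤ N) (P : ℝ)
    (hP : P ∈ Set.Ioc (1 / (N : ℝ)) 1) (M : ℕ) (hM : M = ⌊1 / P⌋₊)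
    (PT : Set (Fin (N - 1) → ℝ))
    (hPT : PT = { q : Fin (N - 1) → ℝ | (∀ k, 0 ≤ q k ∧ q k ≤ P) ∧ ∑ k, q k = 1 - P })
    (v : Fin (N - 1) → ℝ)
    (hv : v = fun k : Fin (N - 1) =>
      if (k : ℕ) < M - 1 then P else if (k : ℕ) = M - 1 then 1 - (M : ℝ) * P else 0) :
    Set.extremePoints ℝ PT = { q | ∃ σ : Equiv.Perm (Fin (N - 1)), q = v ∘ σ } ∧
    ∀ (k0 : Fin (N - 1)) (ε : Fin (N - 1) → Bool),
      Set.Subsingleton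
        { q ∈ Set.extremePoints ℝ PT | ∀ k, k ≠ k0 → q k = if ε k then P else 0 } := by
  change PT = boxSlice P (1 - P) at hPT
  subst hPT
  obtain ⟨hNP, hP1⟩ := hP
  have hN0 : (0 : ℝ) < N := Nat.cast_pos.2 (by omega)
  have hP0 : 0 < P := (by positivity : (0 : ℝ) < 1 / N).trans hNP
  rw [div_lt_iff₀ hN0] at hNP
  have hMle : (M : ℝ) * P ≤ 1 := hM ▸ (le_div_iff₀ hP0).1 (Nat.floor_le (by positivity))
  have hMlt : 1 < (M + 1 : ℝ) * P := hM ▸ (div_lt_iff₀ hP0).1 (Nat.lt_floor_add_one (1 / P))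
  have hM1 : 1 ≤ M := hM ▸ Nat.le_floor (by rw [Nat.cast_one, le_div_iff₀ hP0]; linarith)
  have hMN : M < N := by exact_mod_cast (show (M : ℝ) < N by nlinarith)
  set iv : Fin (N - 1) := ⟨M - 1, by omega⟩
  replace hv : v = stairVector (Iio iv) iv P (1 - M * P) := by
    rw [hv]
    funext k
    simp [stairVector, iv, Fin.lt_def, Fin.ext_iff]
  subst hv
  refine ⟨Set.ext fun q => ⟨fun hq => ?_, ?_⟩, fun k₀ _ q hq q' hq' => ?_⟩
  · rw [mem_extremePoints_boxSlice_iff] at hq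
    have hcard : 1 < (Fintype.card (Fin (N - 1)) + 1 : ℝ) * P := by
      rw [Fintype.card_fin, Nat.cast_sub (by omega), Nat.cast_one, sub_add_cancel]
      linarith
    obtain ⟨A, i, hiA, hA, rfl⟩ := exists_eq_stairVector hP0 hcard hq.1 hq.2
    rw [← hM] at hA ⊢
    have hcardA : #A = #(Iio iv) := by rw [Fin.card_Iio]; exact Nat.eq_sub_of_add_eq hA
    exact exists_perm_stairVector_eq hiA (by simp) hcardA P _
  · rintro ⟨σ, rfl⟩
    refine comp_perm_mem_extremePoints_boxSlice
      (stairVector_mem_extremePoints_boxSlice (by simp) ⟨by linarith, by linarith⟩ ?_) σ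
    rw [Fin.card_Iio, Nat.cast_sub hM1]
    ring
  · exact eq_of_sum_eq_of_eq_off_subsingleton (Set.subsingleton_singleton (a := k₀))
      (fun k hk => (hq.2 k hk).trans (hq'.2 k hk).symm) (hq.1.1.2.trans hq'.1.1.2.symm)
end

section
/- Let (h,φ) be an entropic functional pair. Then the function P ↦ H^min_{(h,φ)}(P) = h( ⌊1/P⌋ φ(P) + φ(1 − ⌊1/P⌋ P) ) is continuous and nonincreasing on the interval (0, 1]. Consequently, the function θ ↦ D_{(h,φ)}(θ) = H^min_{(h,φ)}(cos²θ) is nondecreasing on [0, π/2). -/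
open scoped BigOperators

noncomputable section

/-!
On `[1/(m+1), 1/m]` the floor `⌊1/P⌋` is `m`, and `m φ(x) + φ(1 - m x)` is antitone there for
concave `φ`: raising `x` lowers the last entry `m` times as fast, and the chord slope of `φ` near
`1 - m x` dominates the one near `x`. The same estimate shows that the breakpoint values
`m φ(1/m)` increase with `m`, so the pieces fit together. For continuity substitute `t = 1/P`:
the φ-sum becomes `(t - s) φ(1/t) + φ(s/t)` at `s = fract t`, an expression that takes the same
value at `s = 0` and `s = 1` because `φ 0 = 0`. Convex `φ` reduces to concave `-φ`, and `D` is
`H^min` composed with `cos²`, which decreases on `[0, π/2)`.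
-/

open Set

-- `Σ φ` over the vector `(x, …, x, 1 - m x)` with `m` copies of `x`
def phiSplitSum (φ : ℝ → ℝ) (m : ℕ) (x : ℝ) : ℝ := m * φ x + φ (1 - m * x)

def extremalPhiSum (φ : ℝ → ℝ) (P : ℝ) : ℝ := phiSplitSum φ ⌊1 / P⌋₊ P

theorem ConcaveOn.slope_anti_of_le {𝕜 : Type*} [Field 𝕜] [LinearOrder 𝕜] [IsStrictOrderedRing 𝕜]
    {s : Set 𝕜} {f : 𝕜 → 𝕜} (hf : ConcaveOn 𝕜 s f) {a b x y : 𝕜}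
    (ha : a ∈ s) (hb : b ∈ s) (hx : x ∈ s) (hy : y ∈ s) (hab : a < b) (hbx : b ≤ x) (hxy : x < y) :
    (f y - f x) / (y - x) ≤ (f b - f a) / (b - a) := by
  rcases hbx.eq_or_lt with rfl | hbx
  · exact hf.slope_anti_adjacent ha hy hab hxy
  · exact (hf.slope_anti_adjacent hb hy hbx hxy).trans (hf.slope_anti_adjacent ha hx hab hbx)

theorem phiSplitSum_antitoneOn {φ : ℝ → ℝ} (hφ : ConcaveOn ℝ (Icc 0 1) φ) (m : ℕ) :
    AntitoneOn (phiSplitSum φ m) (Icc (1 / (m + 1)) (1 / m)) := by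
  rintro x ⟨hx1, -⟩ y ⟨-, hy2⟩ hxy
  rcases hxy.eq_or_lt with rfl | hxy
  · rfl
  have hx0 : 0 < x := lt_of_lt_of_le (by positivity) hx1
  have hm : (1 : ℝ) ≤ m := by
    rcases m.eq_zero_or_pos with rfl | hm
    · simp only [CharP.cast_eq_zero, div_zero] at hy2
      linarith
    · exact_mod_cast hm
  have hmx : 1 ≤ (m + 1) * x := by rwa [div_le_iff₀' (by positivity)] at hx1
  have hmy : m * y ≤ 1 := by rwa [le_div_iff₀' (by positivity)] at hy2
  -- `1 - m y < 1 - m x ≤ x < y`, and the two chords have run `m (y - x)` and `y - x`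
  have hslope := hφ.slope_anti_of_le (a := 1 - m * y) (b := 1 - m * x)
    ⟨by linarith, by nlinarith⟩ ⟨by nlinarith, by nlinarith⟩ ⟨hx0.le, by nlinarith⟩
    ⟨by linarith, by nlinarith⟩ (by nlinarith) (by linarith) hxy
  rw [div_le_div_iff₀ (by linarith) (by nlinarith)] at hslope
  have : m * (φ y - φ x) ≤ φ (1 - m * x) - φ (1 - m * y) :=
    le_of_mul_le_mul_right (by nlinarith) (sub_pos.2 hxy)
  simp only [phiSplitSum]
  linarith

theorem phiSplitSum_one_div_succ (φ : ℝ → ℝ) (m : ℕ) :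
    phiSplitSum φ m (1 / (m + 1)) = (m + 1) * φ (1 / (m + 1)) := by
  have : 1 - m * (1 / (m + 1 : ℝ)) = 1 / (m + 1) := by field_simp; ring
  rw [phiSplitSum, this]
  ring

theorem phiSplitSum_one_div {φ : ℝ → ℝ} (hφ0 : φ 0 = 0) {m : ℕ} (hm : m ≠ 0) :
    phiSplitSum φ m (1 / m) = m * φ (1 / m) := by
  simp [phiSplitSum, hm, hφ0]

theorem monotone_succ_mul_phi_one_div_succ {φ : ℝ → ℝ} (hφ : ConcaveOn ℝ (Icc 0 1) φ)
    (hφ0 : φ 0 = 0) : Monotone fun m : ℕ => (m + 1 : ℝ) * φ (1 / (m + 1)) := by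
  refine monotone_nat_of_le_succ fun m => ?_
  have hle : (1 : ℝ) / ((m + 1 : ℕ) + 1) ≤ 1 / (m + 1 : ℕ) :=
    one_div_le_one_div_of_le (by positivity) (by linarith)
  have := phiSplitSum_antitoneOn hφ (m + 1) (left_mem_Icc.2 hle) (right_mem_Icc.2 hle) hle
  rw [phiSplitSum_one_div_succ, phiSplitSum_one_div hφ0 m.succ_ne_zero] at this
  push_cast at this ⊢
  exact this

theorem mem_Icc_one_div_floor_one_div {P : ℝ} (hP : P ∈ Ioc 0 1) :
    P ∈ Icc (1 / (⌊1 / P⌋₊ + 1 : ℝ)) (1 / ⌊1 / P⌋₊) := by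
  obtain ⟨hP0, hP1⟩ := hP
  have h1 : 1 ≤ 1 / P := by rw [le_div_iff₀ hP0]; linarith
  have hn : (0 : ℝ) < ⌊1 / P⌋₊ := by exact_mod_cast Nat.floor_pos.2 h1
  exact ⟨(one_div_le (by positivity) hP0).2 (Nat.lt_floor_add_one _).le,
    (le_one_div hP0 hn).2 (Nat.floor_le (by positivity))⟩

theorem extremalPhiSum_antitoneOn {φ : ℝ → ℝ} (hφ : ConcaveOn ℝ (Icc 0 1) φ) (hφ0 : φ 0 = 0) :
    AntitoneOn (extremalPhiSum φ) (Ioc 0 1) := by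
  intro P hP Q hQ hPQ
  have hPmem := mem_Icc_one_div_floor_one_div hP
  have hQmem := mem_Icc_one_div_floor_one_div hQ
  have hfloor : ⌊1 / Q⌋₊ ≤ ⌊1 / P⌋₊ := Nat.floor_mono (one_div_le_one_div_of_le hP.1 hPQ)
  unfold extremalPhiSum
  set k := ⌊1 / Q⌋₊
  set n := ⌊1 / P⌋₊
  rcases hfloor.eq_or_lt with hkn | hkn
  · rw [hkn] at hQmem ⊢
    exact phiSplitSum_antitoneOn hφ n hPmem hQmem hPQ
  obtain ⟨j, hj⟩ : ∃ j, n = j + 1 := Nat.exists_eq_add_one.2 (k.zero_le.trans_lt hkn)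
  rw [hj] at hPmem ⊢
  push_cast at hPmem
  calc phiSplitSum φ k Q
      ≤ phiSplitSum φ k (1 / (k + 1)) :=
        phiSplitSum_antitoneOn hφ k ⟨le_rfl, hQmem.1.trans hQmem.2⟩ hQmem hQmem.1
    _ = (k + 1) * φ (1 / (k + 1)) := phiSplitSum_one_div_succ φ k
    _ ≤ (j + 1) * φ (1 / (j + 1)) := monotone_succ_mul_phi_one_div_succ hφ hφ0 (by omega)
    _ = phiSplitSum φ (j + 1) (1 / (j + 1)) := by
        rw [← Nat.cast_succ, phiSplitSum_one_div hφ0 j.succ_ne_zero]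
    _ ≤ phiSplitSum φ (j + 1) P := by
        refine phiSplitSum_antitoneOn hφ (j + 1) ?_ ?_ hPmem.2 <;> push_cast
        exacts [hPmem, ⟨hPmem.1.trans hPmem.2, le_rfl⟩]

theorem extremalPhiSum_neg (φ : ℝ → ℝ) (P : ℝ) :
    extremalPhiSum (-φ) P = -extremalPhiSum φ P := by
  simp only [extremalPhiSum, phiSplitSum, Pi.neg_apply]
  ring

theorem extremalPhiSum_monotoneOn {φ : ℝ → ℝ} (hφ : ConvexOn ℝ (Icc 0 1) φ) (hφ0 : φ 0 = 0) :
    MonotoneOn (extremalPhiSum φ) (Ioc 0 1) := fun P hP Q hQ hPQ => by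
  have := extremalPhiSum_antitoneOn hφ.neg (by simp [hφ0]) hP hQ hPQ
  rwa [extremalPhiSum_neg, extremalPhiSum_neg, neg_le_neg_iff] at this

theorem continuousOn_extremalPhiSum {φ : ℝ → ℝ} (hφ : ContinuousOn φ (Icc 0 1)) (hφ0 : φ 0 = 0) :
    ContinuousOn (extremalPhiSum φ) (Ioc 0 1) := by
  -- with `t = 1/P ≥ 1` and `s = fract t` this is the φ-sum; `max t 1` only extends it continuously
  set ψ : ℝ → ℝ → ℝ := fun t s => (t - s) * φ (1 / max t 1) + φ (s / max t 1)
  have hmax : ∀ t : ℝ, 0 < max t 1 := fun t => lt_max_of_lt_right one_pos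
  have hψ : ContinuousOn (Function.uncurry ψ) (univ ×ˢ Icc 0 1) := by
    refine ((continuous_fst.sub continuous_snd).mul ?_).continuousOn.add ?_
    · refine hφ.comp_continuous
        (continuous_const.div (continuous_fst.max continuous_const) fun p => (hmax p.1).ne')
        fun p => ⟨by positivity [hmax p.1], (div_le_one (hmax p.1)).2 (le_max_right _ _)⟩
    · refine hφ.comp (continuous_snd.div (continuous_fst.max continuous_const)
        fun p => (hmax p.1).ne').continuousOn fun p ⟨_, hs0, hs1⟩ => ?_
      exact ⟨div_nonneg hs0 (hmax p.1).le,
        (div_le_one (hmax p.1)).2 (hs1.trans (le_max_right _ _))⟩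
  have hψ01 : ∀ t, ψ t 0 = ψ t 1 := fun t => by simp [ψ, hφ0]; ring
  have hfract : Continuous fun t => ψ t (Int.fract t) := hψ.comp_fract continuous_id hψ01
  have hinv : ContinuousOn (fun P : ℝ => 1 / P) (Ioc 0 1) :=
    continuousOn_const.div continuousOn_id fun P hP => hP.1.ne'
  refine (hfract.comp_continuousOn hinv).congr fun P ⟨hP0, hP1⟩ => ?_
  have ht : 1 ≤ 1 / P := by rw [le_div_iff₀ hP0]; linarith
  have hfloor : (⌊1 / P⌋₊ : ℝ) = ⌊1 / P⌋ := natCast_floor_eq_intCast_floor (by linarith)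
  simp only [Function.comp, ψ, extremalPhiSum, phiSplitSum, max_eq_left ht, one_div_one_div,
    Int.fract, hfloor]
  congr 1
  · ring
  · congr 1; field_simp

theorem Real.antitoneOn_cos_sq : AntitoneOn (fun θ => Real.cos θ ^ 2) (Ico 0 (Real.pi / 2)) :=
  fun _ ha _ hb hab => pow_le_pow_left₀
    (Real.cos_nonneg_of_mem_Icc ⟨by linarith [Real.pi_pos, hb.1], hb.2.le⟩)
    (Real.cos_le_cos_of_nonneg_of_le_pi ha.1 (by linarith [Real.pi_pos, hb.2]) hab) 2

theorem Real.mapsTo_cos_sq :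
    MapsTo (fun θ => Real.cos θ ^ 2) (Ico 0 (Real.pi / 2)) (Ioc 0 1) := fun θ hθ =>
  ⟨pow_pos (Real.cos_pos_of_mem_Ioo ⟨by linarith [Real.pi_pos, hθ.1], hθ.2⟩) 2,
    Real.cos_sq_le_one θ⟩

/-- `P ↦ H^min_{(h,φ)}(P)` is continuous and nonincreasing on `(0,1]`;
consequently `θ ↦ D_{(h,φ)}(θ)` is nondecreasing on `[0, π/2)`. -/
theorem hmin_continuous_antitone (e : EntropicPair) :
    ContinuousOn e.Hmin (Set.Ioc 0 1) ∧ AntitoneOn e.Hmin (Set.Ioc 0 1) ∧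
    MonotoneOn e.D (Set.Ico 0 (Real.pi / 2)) := by
  have hanti : AntitoneOn e.Hmin (Ioc 0 1) := by
    rcases e.admissible with ⟨hφ, hh⟩ | ⟨hφ, hh⟩
    · exact hh.monotone.comp_antitoneOn (extremalPhiSum_antitoneOn hφ.concaveOn e.phi_zero)
    · exact hh.antitone.comp_monotoneOn (extremalPhiSum_monotoneOn hφ.convexOn e.phi_zero)
  exact ⟨e.h_cont.comp_continuousOn (continuousOn_extremalPhiSum e.phi_cont e.phi_zero), hanti,
    hanti.comp Real.antitoneOn_cos_sq Real.mapsTo_cos_sq⟩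
end
end

section
/- Let f : (0,∞) → ℝ be increasing with f(1) = 0, and define F_α(p) = f( Σ_k p_k^α ) / (1−α) for a probability vector p and α ≥ 0, α ≠ 1 (with the convention 0^0 := 0). (i) If α > 1 and f(x) + f(y) ≤ f(xy) for all x, y ∈ (0,1], then for all probability vectors p of length N and q of length M one has F_α(p) + F_α(q) ≥ F_α(p ⊗ q). (ii) If 0 ≤ α < 1 and f(x) + f(y) ≥ f(xy) for all x, y ≥ 1, then likewise F_α(p) + F_α(q) ≥ F_α(p ⊗ q). -/
open scoped BigOperators

noncomputable section

/-- The generalized entropy `F_α(p) = f(Σ_k p_k^α)/(1−α)`. -/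
noncomputable def Fent (f : ℝ → ℝ) (α : ℝ) {ι : Type*} [Fintype ι] (p : ι → ℝ) : ℝ :=
  f (∑ k, pow0 (p k) α) / (1 - α)

/-!
Both parts reduce to one identity: the power sum of `p ⊗ q` factorises, `Σ (p_k q_l)^α =
(Σ p_k^α)(Σ q_l^α)`, so `(1 - α) F_α(p ⊗ q) = f(S_p S_q)` with `S_p = Σ p_k^α`. For `α > 1` each power
sum lies in `(0, 1]`, for `α < 1` in `[1, ∞)`, and the assumed inequality for `f` on that
range, divided by `1 - α` (negative, resp. positive), gives the claim.
-/

lemma pow0_of_ne_zero {x : ℝ} (hx : x ≠ 0) (l : ℝ) : pow0 x l = x ^ l := if_neg hx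

lemma pow0_pos {x : ℝ} (hx : 0 < x) (l : ℝ) : 0 < pow0 x l := by
  rw [pow0_of_ne_zero hx.ne']
  exact Real.rpow_pos_of_pos hx l

lemma pow0_mul {x y : ℝ} (hx : 0 ≤ x) (hy : 0 ≤ y) (l : ℝ) :
    pow0 (x * y) l = pow0 x l * pow0 y l := by
  rcases hx.eq_or_lt with rfl | hx
  · simp [pow0]
  rcases hy.eq_or_lt with rfl | hy
  · simp [pow0]
  rw [pow0_of_ne_zero (by positivity), pow0_of_ne_zero hx.ne', pow0_of_ne_zero hy.ne']
  exact Real.mul_rpow hx.le hy.le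

lemma pow0_le_self {x l : ℝ} (hx₀ : 0 ≤ x) (hx₁ : x ≤ 1) (hl : 1 ≤ l) : pow0 x l ≤ x := by
  rcases eq_or_ne x 0 with rfl | hx
  · simp [pow0]
  rw [pow0_of_ne_zero hx]
  exact Real.rpow_le_self_of_le_one hx₀ hx₁ hl

lemma self_le_pow0 {x l : ℝ} (hx₀ : 0 ≤ x) (hx₁ : x ≤ 1) (hl : l ≤ 1) : x ≤ pow0 x l := by
  rcases eq_or_ne x 0 with rfl | hx
  · simp [pow0]
  rw [pow0_of_ne_zero hx]
  exact Real.self_le_rpow_of_le_one hx₀ hx₁ hl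

lemma sum_pow0_mul {ι κ : Type*} [Fintype ι] [Fintype κ] {p : ι → ℝ} {q : κ → ℝ}
    (hp : ∀ k, 0 ≤ p k) (hq : ∀ l, 0 ≤ q l) (α : ℝ) :
    ∑ kl : ι × κ, pow0 (p kl.1 * q kl.2) α = (∑ k, pow0 (p k) α) * ∑ l, pow0 (q l) α := by
  rw [Finset.sum_mul_sum, Fintype.sum_prod_type]
  exact Finset.sum_congr rfl fun k _ ↦ Finset.sum_congr rfl fun l _ ↦ pow0_mul (hp k) (hq l) α

lemma Fent_kronecker {ι κ : Type*} [Fintype ι] [Fintype κ] {p : ι → ℝ} {q : κ → ℝ}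
    (hp : ∀ k, 0 ≤ p k) (hq : ∀ l, 0 ≤ q l) (f : ℝ → ℝ) (α : ℝ) :
    Fent f α (fun kl : ι × κ ↦ p kl.1 * q kl.2) =
      f ((∑ k, pow0 (p k) α) * ∑ l, pow0 (q l) α) / (1 - α) := by
  rw [Fent, sum_pow0_mul hp hq]

namespace IsProbVec

variable {ι : Type*} [Fintype ι] {p : ι → ℝ}

lemma le_one_s18 (hp : IsProbVec p) (k : ι) : p k ≤ 1 :=
  hp.2 ▸ Finset.single_le_sum (fun j _ ↦ hp.1 j) (Finset.mem_univ k)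

lemma sum_pow0_pos (hp : IsProbVec p) (α : ℝ) : 0 < ∑ k, pow0 (p k) α := by
  obtain ⟨k, hk⟩ : ∃ k, 0 < p k := by
    by_contra! h
    have : ∑ k, p k ≤ 0 := Finset.sum_nonpos fun k _ ↦ h k
    linarith [hp.2]
  exact Finset.sum_pos' (fun j _ ↦ pow0_nonneg (hp.1 j) α) ⟨k, Finset.mem_univ k, pow0_pos hk α⟩

lemma sum_pow0_le_one (hp : IsProbVec p) {α : ℝ} (hα : 1 ≤ α) : ∑ k, pow0 (p k) α ≤ 1 :=
  hp.2 ▸ Finset.sum_le_sum fun k _ ↦ pow0_le_self (hp.1 k) (hp.le_one_s18 k) hα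

lemma one_le_sum_pow0 (hp : IsProbVec p) {α : ℝ} (hα : α ≤ 1) : 1 ≤ ∑ k, pow0 (p k) α :=
  hp.2 ▸ Finset.sum_le_sum fun k _ ↦ self_le_pow0 (hp.1 k) (hp.le_one_s18 k) hα

end IsProbVec

theorem Fent_superadditive_kronecker_general (f : ℝ → ℝ) :
    (∀ α : ℝ, 1 < α →
      (∀ x y : ℝ, x ∈ Set.Ioc (0:ℝ) 1 → y ∈ Set.Ioc (0:ℝ) 1 → f x + f y ≤ f (x * y)) →
      ∀ {N M : ℕ} (p : Fin N → ℝ) (q : Fin M → ℝ), IsProbVec p → IsProbVec q →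
        Fent f α p + Fent f α q ≥ Fent f α (fun kl : Fin N × Fin M => p kl.1 * q kl.2)) ∧
    (∀ α : ℝ, 0 ≤ α → α < 1 →
      (∀ x y : ℝ, 1 ≤ x → 1 ≤ y → f x + f y ≥ f (x * y)) →
      ∀ {N M : ℕ} (p : Fin N → ℝ) (q : Fin M → ℝ), IsProbVec p → IsProbVec q →
        Fent f α p + Fent f α q ≥ Fent f α (fun kl : Fin N × Fin M => p kl.1 * q kl.2)) := by
  constructor
  · intro α hα hsuper N M p q hp hq
    rw [Fent_kronecker hp.1 hq.1, Fent, Fent, ← add_div, ge_iff_le,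
      div_le_div_right_of_neg (by linarith)]
    exact hsuper _ _ ⟨hp.sum_pow0_pos α, hp.sum_pow0_le_one hα.le⟩
      ⟨hq.sum_pow0_pos α, hq.sum_pow0_le_one hα.le⟩
  · intro α _ hα hsub N M p q hp hq
    rw [Fent_kronecker hp.1 hq.1, Fent, Fent, ← add_div, ge_iff_le,
      div_le_div_iff_of_pos_right (by linarith)]
    exact hsub _ _ (hp.one_le_sum_pow0 hα.le) (hq.one_le_sum_pow0 hα.le)

/-- Sub/super-additivity of `F_α` with respect to the Kronecker product:
(i) if `α > 1` and `f(x) + f(y) ≤ f(xy)` on `(0,1]²`, then `F_α(p) + F_α(q) ≥ F_α(p ⊗ q)`;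
(ii) if `0 ≤ α < 1` and `f(x) + f(y) ≥ f(xy)` on `[1,∞)²`, then likewise. -/
theorem Fent_superadditive_kronecker (f : ℝ → ℝ)
    (hf : StrictMonoOn f (Set.Ioi 0)) (hf1 : f 1 = 0) :
    (∀ α : ℝ, 1 < α →
      (∀ x y : ℝ, x ∈ Set.Ioc (0:ℝ) 1 → y ∈ Set.Ioc (0:ℝ) 1 → f x + f y ≤ f (x * y)) →
      ∀ {N M : ℕ} (p : Fin N → ℝ) (q : Fin M → ℝ), IsProbVec p → IsProbVec q →
        Fent f α p + Fent f α q ≥ Fent f α (fun kl : Fin N × Fin M => p kl.1 * q kl.2)) ∧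
    (∀ α : ℝ, 0 ≤ α → α < 1 →
      (∀ x y : ℝ, 1 ≤ x → 1 ≤ y → f x + f y ≥ f (x * y)) →
      ∀ {N M : ℕ} (p : Fin N → ℝ) (q : Fin M → ℝ), IsProbVec p → IsProbVec q →
        Fent f α p + Fent f α q ≥ Fent f α (fun kl : Fin N × Fin M => p kl.1 * q kl.2)) :=
  Fent_superadditive_kronecker_general f
end
end
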